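/- arXiv:2012.15617 — 9 statements merged into one kernel-verified Lean document; each statement's English description precedes it below -/
import Mathlib

section
/- If a regular expression R (built from letters, union, and concatenation, without ∅, ε, or star) describes a homogeneous language L(R) ⊆ {0,1}^n, then there is a monotone arithmetic formula of size at most the number of nodes of R whose set of exponent vectors equals L(R), viewing each word w ∈ {0,1}^n as the vector (w_1,...,w_n) ∈ ℕ^n. -/
inductive RE (α : Type) : Type where
  | eps : RE α
  | char : α → RE α
  | union : RE α → RE α → RE α
  | cat : RE α → RE α → RE α

namespace RE
variable {α : Type}

/-- The language described by a star-free regular expression. -/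
def lang : RE α → Language α
  | eps => 1
  | char a => {[a]}
  | union r s => r.lang + s.lang
  | cat r s => r.lang * s.lang

/-- Reverse polish length: the number of nodes of the syntax tree. -/
def size : RE α → ℕ
  | eps => 1
  | char _ => 1
  | union r s => r.size + s.size + 1
  | cat r s => r.size + s.size + 1

/-- `r` is homogeneous of degree `d`: every described word has length `d`. -/
def Homog (r : RE α) (d : ℕ) : Prop := ∀ w ∈ r.lang, w.length = d

/-- Log-product expressions. -/
inductive LogProd : RE α → Prop where
  | char (a : α) : LogProd (char a)
  | catL {B₁ B₂ : RE α} {d₁ d₂ : ℕ} : LogProd B₁ → B₁.Homog d₁ → B₂.Homog d₂ →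
      d₂ ≤ d₁ → LogProd (cat B₁ B₂)
  | catR {B₁ B₂ : RE α} {d₁ d₂ : ℕ} : LogProd B₁ → B₁.Homog d₁ → B₂.Homog d₂ →
      d₂ ≤ d₁ → LogProd (cat B₂ B₁)

end RE

open scoped NNReal

/-- A monotone arithmetic formula in variables `x_1, …, x_n`: leaves hold
nonnegative real constants or variables, gates are addition or multiplication. -/
inductive MonFormula (n : ℕ) : Type where
  | const : ℝ≥0 → MonFormula n
  | var : Fin n → MonFormula n
  | add : MonFormula n → MonFormula n → MonFormula n
  | mul : MonFormula n → MonFormula n → MonFormula n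

namespace MonFormula
variable {n : ℕ}

/-- The polynomial computed by a monotone arithmetic formula. -/
noncomputable def eval : MonFormula n → MvPolynomial (Fin n) ℝ
  | const c => MvPolynomial.C (c : ℝ)
  | var i => MvPolynomial.X i
  | add f g => eval f + eval g
  | mul f g => eval f * eval g

/-- The size of a formula: its number of nodes. -/
def fsize : MonFormula n → ℕ
  | const _ => 1
  | var _ => 1
  | add f g => fsize f + fsize g + 1
  | mul f g => fsize f + fsize g + 1

open Classical in
/-- The produced set of exponent vectors, defined structurally: union at
addition gates and Minkowski sum at multiplication gates. -/
noncomputable def produced : MonFormula n → Set (Fin n →₀ ℕ)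
  | const c => if c = 0 then ∅ else {0}
  | var i => {Finsupp.single i 1}
  | add f g => produced f ∪ produced g
  | mul f g => Set.image2 (· + ·) (produced f) (produced g)

end MonFormula

def RE.EpsFree {α : Type} : RE α → Prop
  | .eps => False
  | .char _ => True
  | .union r s => r.EpsFree ∧ s.EpsFree
  | .cat r s => r.EpsFree ∧ s.EpsFree

/-!
Translate `R` node by node: the letter `0` becomes the constant `1`, the letter `1` becomes a
variable, union becomes `+` and concatenation becomes `×`. Since `L(R)` is homogeneous and no
subexpression has an empty language, every subexpression is itself homogeneous and its words
occupy a fixed block of positions, so a letter `1` sits at a well-defined position `i` and becomes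
`x_i`; the exponent vectors of a product are then the sums of those of its factors. As all
coefficients are nonnegative, no monomial cancels, and the exponent vectors of the polynomial are
exactly the vectors of the words of `L(R)`.
-/

namespace MvPolynomial

variable {σ R : Type*} [CommSemiring R] [PartialOrder R] [IsOrderedRing R]
  {p q : MvPolynomial σ R}

lemma coeff_mul_nonneg (hp : ∀ m, 0 ≤ p.coeff m) (hq : ∀ m, 0 ≤ q.coeff m) (m : σ →₀ ℕ) :
    0 ≤ (p * q).coeff m := by
  classical
  rw [coeff_mul]
  exact Finset.sum_nonneg fun x _ => mul_nonneg (hp x.1) (hq x.2)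

lemma support_add_of_coeff_nonneg [DecidableEq σ] (hp : ∀ m, 0 ≤ p.coeff m)
    (hq : ∀ m, 0 ≤ q.coeff m) : (p + q).support = p.support ∪ q.support := by
  ext m
  simp only [mem_support_iff, coeff_add, Finset.mem_union, ne_eq,
    add_eq_zero_iff_of_nonneg (hp m) (hq m), not_and_or]

lemma coe_support_mul_of_coeff_nonneg [NoZeroDivisors R] (hp : ∀ m, 0 ≤ p.coeff m)
    (hq : ∀ m, 0 ≤ q.coeff m) :
    ((p * q).support : Set (σ →₀ ℕ)) = Set.image2 (· + ·) p.support q.support := by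
  classical
  ext m
  simp only [Finset.mem_coe, mem_support_iff, coeff_mul, Set.mem_image2, ne_eq,
    Finset.sum_eq_zero_iff_of_nonneg fun (x : (σ →₀ ℕ) × (σ →₀ ℕ)) _ =>
      mul_nonneg (hp x.1) (hq x.2),
    not_forall, mul_eq_zero, not_or, Finset.HasAntidiagonal.mem_antidiagonal, Prod.exists]
  constructor
  · rintro ⟨a, b, hab, ha, hb⟩
    exact ⟨a, ha, b, hb, hab⟩
  · rintro ⟨a, ha, b, hb, hab⟩
    exact ⟨a, b, hab, ha, hb⟩

end MvPolynomial

namespace MonFormula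

variable {n : ℕ}

lemma coeff_eval_nonneg (F : MonFormula n) (m : Fin n →₀ ℕ) : 0 ≤ F.eval.coeff m := by
  induction F generalizing m with
  | const c => simp only [eval, MvPolynomial.coeff_C]; split <;> positivity
  | var i => classical simp only [eval, MvPolynomial.coeff_X]; split <;> norm_num
  | add f g hf hg => simpa only [eval, MvPolynomial.coeff_add] using add_nonneg (hf m) (hg m)
  | mul f g hf hg => exact MvPolynomial.coeff_mul_nonneg hf hg m

/-- With nonnegative coefficients no cancellation can occur. -/
lemma coe_support_eval (F : MonFormula n) : (F.eval.support : Set (Fin n →₀ ℕ)) = F.produced := by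
  classical
  induction F with
  | const c => by_cases hc : c = 0 <;> simp [eval, produced, MvPolynomial.support_C, hc]
  | var i => simp [eval, produced, MvPolynomial.support_X]
  | add f g hf hg =>
    rw [eval, produced, MvPolynomial.support_add_of_coeff_nonneg f.coeff_eval_nonneg
      g.coeff_eval_nonneg, Finset.coe_union, hf, hg]
  | mul f g hf hg =>
    rw [eval, produced, MvPolynomial.coe_support_mul_of_coeff_nonneg f.coeff_eval_nonneg
      g.coeff_eval_nonneg, hf, hg]

end MonFormula

/-- The exponent vector of the word `w` written at positions `o, o + 1, …`; letters falling
outside `Fin n` are dropped. -/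
noncomputable def wordVec (n o : ℕ) (w : List Bool) : Fin n →₀ ℕ :=
  Finsupp.equivFunOnFinite.symm fun i => if o ≤ i.1 ∧ w.getD (i.1 - o) false then 1 else 0

lemma wordVec_apply (n o : ℕ) (w : List Bool) (i : Fin n) :
    wordVec n o w i = if o ≤ i.1 ∧ w.getD (i.1 - o) false then 1 else 0 := rfl

lemma wordVec_zero_apply (n : ℕ) (w : List Bool) (i : Fin n) :
    wordVec n 0 w i = if w.getD i.1 false then 1 else 0 := by
  simp [wordVec_apply]

lemma wordVec_append (n o : ℕ) (u v : List Bool) :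
    wordVec n o (u ++ v) = wordVec n o u + wordVec n (o + u.length) v := by
  ext i
  simp only [Finsupp.add_apply, wordVec_apply]
  by_cases hi : i.1 < o + u.length
  · have hv : ¬ o + u.length ≤ i.1 := by omega
    by_cases ho : o ≤ i.1
    · rw [List.getD_append _ _ _ _ (by omega)]
      simp [hv, ho]
    · simp [hv, ho]
  · rw [List.getD_append_right _ _ _ _ (by omega), List.getD_eq_default u _ (by omega),
      Nat.sub_sub]
    simp [show o ≤ i.1 by omega, show o + u.length ≤ i.1 by omega]

lemma wordVec_singleton_false (n o : ℕ) : wordVec n o [false] = 0 := by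
  ext i
  simp [wordVec_apply]

lemma wordVec_singleton_true {n o : ℕ} (ho : o < n) :
    wordVec n o [true] = Finsupp.single ⟨o, ho⟩ 1 := by
  ext i
  rw [wordVec_apply, Finsupp.single_apply]
  by_cases hio : o = i.1
  · simp [hio]
  · have hgt : ¬ (o ≤ i.1 ∧ [true].getD (i.1 - o) false) := by
      rintro ⟨h1, h2⟩
      rw [List.getD_eq_default _ _ (by simp; omega)] at h2
      exact Bool.false_ne_true h2
    rw [if_neg hgt, if_neg (fun h => hio (congrArg Fin.val h))]

namespace RE

variable {α : Type}

lemma exists_mem_lang_of_epsFree {r : RE α} (hr : r.EpsFree) : ∃ w, w ∈ r.lang := by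
  induction r with
  | eps => exact hr.elim
  | char a => exact ⟨[a], rfl⟩
  | union r s ihr _ =>
    obtain ⟨w, hw⟩ := ihr hr.1
    exact ⟨w, Or.inl hw⟩
  | cat r s ihr ihs =>
    obtain ⟨u, hu⟩ := ihr hr.1
    obtain ⟨v, hv⟩ := ihs hr.2
    exact ⟨u ++ v, Language.mem_mul.mpr ⟨u, hu, v, hv, rfl⟩⟩

lemma Homog.union_left {r s : RE α} {d : ℕ} (h : (union r s).Homog d) : r.Homog d :=
  fun w hw => h w (Or.inl hw)

lemma Homog.union_right {r s : RE α} {d : ℕ} (h : (union r s).Homog d) : s.Homog d :=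
  fun w hw => h w (Or.inr hw)

/-- Fixing a word of one factor pins down the length of every word of the other. -/
lemma Homog.exists_of_cat {r s : RE α} {d : ℕ} (h : (cat r s).Homog d) (hr : ∃ u, u ∈ r.lang)
    (hs : ∃ v, v ∈ s.lang) : ∃ d₁ d₂, r.Homog d₁ ∧ s.Homog d₂ ∧ d₁ + d₂ = d := by
  obtain ⟨u₀, hu₀⟩ := hr
  obtain ⟨v₀, hv₀⟩ := hs
  have hlen : ∀ u ∈ r.lang, ∀ v ∈ s.lang, u.length + v.length = d := fun u hu v hv => by
    simpa using h (u ++ v) (Language.mem_mul.mpr ⟨u, hu, v, hv, rfl⟩)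
  refine ⟨u₀.length, v₀.length, fun u hu => ?_, fun v hv => ?_, hlen u₀ hu₀ v₀ hv₀⟩
  · have := hlen u hu v₀ hv₀; have := hlen u₀ hu₀ v₀ hv₀; omega
  · have := hlen u₀ hu₀ v hv; have := hlen u₀ hu₀ v₀ hv₀; omega

end RE

open MonFormula in
theorem RE.exists_monFormula_produced_eq {n : ℕ} (r : RE Bool) (hr : r.EpsFree) {d o : ℕ}
    (hd : r.Homog d) (ho : o + d ≤ n) :
    ∃ F : MonFormula n, F.fsize ≤ r.size ∧ F.produced = wordVec n o '' r.lang := by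
  induction r generalizing d o with
  | eps => exact hr.elim
  | char a =>
    have hd1 : d = 1 := (hd [a] rfl).symm
    subst hd1
    cases a with
    | false =>
      refine ⟨const 1, le_rfl, ?_⟩
      show _ = wordVec n o '' ({[false]} : Set (List Bool))
      simp [produced, wordVec_singleton_false]
    | true =>
      refine ⟨var ⟨o, by omega⟩, le_rfl, ?_⟩
      show _ = wordVec n o '' ({[true]} : Set (List Bool))
      simp [produced, wordVec_singleton_true (show o < n by omega)]
  | union r s ihr ihs =>
    obtain ⟨F₁, hF₁, hp₁⟩ := ihr hr.1 hd.union_left ho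
    obtain ⟨F₂, hF₂, hp₂⟩ := ihs hr.2 hd.union_right ho
    refine ⟨add F₁ F₂, by simp only [fsize, size]; omega, ?_⟩
    rw [produced, hp₁, hp₂, lang, Language.add_def]
    exact (Set.image_union _ _ _).symm
  | cat r s ihr ihs =>
    obtain ⟨d₁, d₂, hd₁, hd₂, rfl⟩ :=
      hd.exists_of_cat (exists_mem_lang_of_epsFree hr.1) (exists_mem_lang_of_epsFree hr.2)
    obtain ⟨F₁, hF₁, hp₁⟩ := ihr hr.1 hd₁ (o := o) (by omega)
    obtain ⟨F₂, hF₂, hp₂⟩ := ihs hr.2 hd₂ (o := o + d₁) (by omega)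
    refine ⟨mul F₁ F₂, by simp only [fsize, size]; omega, ?_⟩
    rw [produced, hp₁, hp₂, lang, Language.mul_def]
    exact (Set.image2_image_left _ _).trans <| (Set.image2_image_right _ _).trans <|
      (Set.image2_congr fun u hu v _ => by rw [wordVec_append, hd₁ u hu]).trans
      (Set.image_image2 _ _).symm

/-- If a regular expression `R` built from letters, union and concatenation
describes a homogeneous language `L(R) ⊆ {0,1}^n`, then there is a monotone
arithmetic formula of size at most the number of nodes of `R` whose set of
exponent vectors is exactly `L(R)`, viewing a word `w ∈ {0,1}^n` as the
vector `(w_1, …, w_n) ∈ ℕ^n`. -/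
theorem re_to_monFormula {n : ℕ} (r : RE Bool) (hfree : r.EpsFree) (hhom : r.Homog n) :
    ∃ F : MonFormula n, F.fsize ≤ r.size ∧
      ∀ m : Fin n →₀ ℕ,
        m ∈ (MonFormula.eval F).support ↔
          ∃ w ∈ r.lang, ∀ i : Fin n, m i = (if w.getD i.1 false then 1 else 0) := by
  obtain ⟨F, hF, hprod⟩ := r.exists_monFormula_produced_eq (o := 0) hfree hhom (Nat.zero_add n).le
  refine ⟨F, hF, fun m => ?_⟩
  rw [← Finset.mem_coe, F.coe_support_eval, hprod]
  exact exists_congr fun w => and_congr_right fun _ =>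
    Finsupp.ext_iff.trans (forall_congr' fun i => by rw [wordVec_zero_apply, eq_comm])
end

section
/- Let L ⊆ Σ^n be a homogeneous language and h ≥ 0. If every log-product expression B with L(B) ⊆ L satisfies |L(B)| ≤ h, then every regular expression describing L has at least |L|/h nodes in its syntax tree. -/
/-!
Split `r` along its syntax tree. At a union keep both halves; at a concatenation `r · s` of a
homogeneous language, both factors are homogeneous, and we recurse only into the factor of larger
degree, attaching the other factor whole. This yields at most `size r` log-product expressions
whose languages lie in `L(r)` and cover it, so `|L| ≤ size r · h`.
-/

namespace RE

variable {α : Type}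

theorem lang_nonempty : ∀ r : RE α, ∃ w, w ∈ r.lang
  | eps => ⟨[], rfl⟩
  | char a => ⟨[a], rfl⟩
  | union r _ => (lang_nonempty r).imp fun _ hw => (Language.mem_add _ _ _).mpr (.inl hw)
  | cat r s =>
    have ⟨u, hu⟩ := lang_nonempty r
    have ⟨v, hv⟩ := lang_nonempty s
    ⟨u ++ v, Language.mem_mul.mpr ⟨u, hu, v, hv, rfl⟩⟩

theorem lang_finite : ∀ r : RE α, Set.Finite (show Set (List α) from r.lang)
  | eps => Set.finite_singleton []
  | char a => Set.finite_singleton [a]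
  | union r s => by rw [lang, Language.add_def]; exact (lang_finite r).union (lang_finite s)
  | cat r s => by rw [lang, Language.mul_def]; exact (lang_finite r).image2 _ (lang_finite s)

theorem Homog.mono {r s : RE α} {d : ℕ} (hr : r.Homog d) (hsr : s.lang ≤ r.lang) :
    s.Homog d :=
  fun w hw => hr w (hsr hw)

theorem Homog.of_cat {r s : RE α} {d : ℕ} (h : (cat r s).Homog d) :
    ∃ d₁ d₂, r.Homog d₁ ∧ s.Homog d₂ ∧ d₁ + d₂ = d := by
  obtain ⟨u, hu⟩ := lang_nonempty r
  obtain ⟨v, hv⟩ := lang_nonempty s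
  have hlen : ∀ u' ∈ r.lang, ∀ v' ∈ s.lang, u'.length + v'.length = d := fun u' hu' v' hv' => by
    simpa using h _ (Language.mem_mul.mpr ⟨u', hu', v', hv', rfl⟩)
  refine ⟨u.length, v.length, fun u' hu' => ?_, fun v' hv' => ?_, hlen u hu v hv⟩
  · have := hlen u' hu' v hv; have := hlen u hu v hv; omega
  · have := hlen u hu v' hv'; have := hlen u hu v hv; omega

def IsLogProdCover (S : Finset (RE α)) (K : Language α) : Prop :=
  (∀ B ∈ S, B.LogProd ∧ B.lang ≤ K) ∧ ∀ w ∈ K, ∃ B ∈ S, w ∈ B.lang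

namespace IsLogProdCover

variable {S T : Finset (RE α)} {K M : Language α}

theorem singleton_char (a : α) : IsLogProdCover {char a} (char a).lang :=
  ⟨by simpa using LogProd.char a, fun _ hw => ⟨char a, Finset.mem_singleton_self _, hw⟩⟩

theorem union [DecidableEq (RE α)] (hS : IsLogProdCover S K) (hT : IsLogProdCover T M) :
    IsLogProdCover (S ∪ T) (K + M) := by
  refine ⟨fun B hB => ?_, fun w hw => ?_⟩
  · rcases Finset.mem_union.mp hB with hB | hB
    · exact ⟨(hS.1 B hB).1, (hS.1 B hB).2.trans le_self_add⟩
    · exact ⟨(hT.1 B hB).1, (hT.1 B hB).2.trans le_add_self⟩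
  · rcases (Language.mem_add _ _ _).mp hw with hw | hw
    · obtain ⟨B, hB, hwB⟩ := hS.2 w hw
      exact ⟨B, Finset.mem_union_left _ hB, hwB⟩
    · obtain ⟨B, hB, hwB⟩ := hT.2 w hw
      exact ⟨B, Finset.mem_union_right _ hB, hwB⟩

theorem cat_right [DecidableEq (RE α)] {r s : RE α} {d₁ d₂ : ℕ} (hS : IsLogProdCover S r.lang)
    (hr : r.Homog d₁) (hs : s.Homog d₂) (hd : d₂ ≤ d₁) :
    IsLogProdCover (S.image (cat · s)) (cat r s).lang := by
  refine ⟨fun B' hB' => ?_, fun w hw => ?_⟩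
  · obtain ⟨B, hB, rfl⟩ := Finset.mem_image.mp hB'
    exact ⟨.catL (hS.1 B hB).1 (hr.mono (hS.1 B hB).2) hs hd,
      mul_le_mul_left (hS.1 B hB).2 _⟩
  · obtain ⟨u, hu, v, hv, rfl⟩ := Language.mem_mul.mp hw
    obtain ⟨B, hB, huB⟩ := hS.2 u hu
    exact ⟨cat B s, Finset.mem_image_of_mem _ hB, Language.mem_mul.mpr ⟨u, huB, v, hv, rfl⟩⟩

theorem cat_left [DecidableEq (RE α)] {r s : RE α} {d₁ d₂ : ℕ} (hS : IsLogProdCover S s.lang)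
    (hs : s.Homog d₁) (hr : r.Homog d₂) (hd : d₂ ≤ d₁) :
    IsLogProdCover (S.image (cat r ·)) (cat r s).lang := by
  refine ⟨fun B' hB' => ?_, fun w hw => ?_⟩
  · obtain ⟨B, hB, rfl⟩ := Finset.mem_image.mp hB'
    exact ⟨.catR (hS.1 B hB).1 (hs.mono (hS.1 B hB).2) hr hd,
      mul_le_mul_right (hS.1 B hB).2 _⟩
  · obtain ⟨u, hu, v, hv, rfl⟩ := Language.mem_mul.mp hw
    obtain ⟨B, hB, hvB⟩ := hS.2 v hv
    exact ⟨cat r B, Finset.mem_image_of_mem _ hB, Language.mem_mul.mpr ⟨u, hu, v, hvB, rfl⟩⟩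

theorem ncard_le_sum (hS : IsLogProdCover S K) :
    Set.ncard (show Set (List α) from K) ≤ ∑ B ∈ S, Set.ncard (show Set (List α) from B.lang) :=
  calc Set.ncard (show Set (List α) from K)
      ≤ Set.ncard (⋃ B ∈ S, show Set (List α) from B.lang) :=
        Set.ncard_le_ncard (fun w hw =>
            have ⟨_, hB, hwB⟩ := hS.2 w hw
            Set.mem_biUnion (Finset.mem_coe.mpr hB) hwB)
          (S.finite_toSet.biUnion fun B _ => lang_finite B)
    _ ≤ _ := S.set_ncard_biUnion_le _

end IsLogProdCover

theorem exists_isLogProdCover [DecidableEq (RE α)] (r : RE α) {d : ℕ} (hd : 1 ≤ d)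
    (hr : r.Homog d) :
    ∃ S : Finset (RE α), S.card ≤ r.size ∧ IsLogProdCover S r.lang := by
  induction r generalizing d with
  | eps => exact absurd (hr [] rfl) (by simp; omega)
  | char a => exact ⟨{char a}, by simp [size], .singleton_char a⟩
  | union r s ihr ihs =>
    obtain ⟨S, hS, hSr⟩ := ihr hd (hr.mono le_self_add)
    obtain ⟨T, hT, hTs⟩ := ihs hd (hr.mono le_add_self)
    refine ⟨S ∪ T, ?_, hSr.union hTs⟩
    have := Finset.card_union_le S T
    simp only [size]; omega
  | cat r s ihr ihs =>
    obtain ⟨d₁, d₂, hr₁, hs₂, hd₁₂⟩ := hr.of_cat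
    rcases le_or_gt d₂ d₁ with hle | hlt
    · obtain ⟨S, hS, hSr⟩ := ihr (by omega) hr₁
      refine ⟨S.image (cat · s), ?_, hSr.cat_right hr₁ hs₂ hle⟩
      have := S.card_image_le (f := (cat · s))
      simp only [size]; omega
    · obtain ⟨S, hS, hSs⟩ := ihs (by omega) hs₂
      refine ⟨S.image (cat r ·), ?_, hSs.cat_left hs₂ hr₁ hlt.le⟩
      have := S.card_image_le (f := (cat r ·))
      simp only [size]; omega

end RE

theorem logProduct_bound_general {α : Type} (n : ℕ) (hn : 1 ≤ n) (L : Language α)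
    (hL : ∀ w ∈ L, w.length = n) (h : ℝ)
    (hbound : ∀ B : RE α, RE.LogProd B → (∀ w ∈ B.lang, w ∈ L) →
      (Set.ncard (show Set (List α) from B.lang) : ℝ) ≤ h) :
    ∀ r : RE α, r.lang = L →
      (Set.ncard (show Set (List α) from L) : ℝ) / h ≤ (r.size : ℝ) := by
  classical
  rintro r rfl
  rcases le_or_gt h 0 with hnonpos | hpos
  · exact (div_nonpos_of_nonneg_of_nonpos (Nat.cast_nonneg _) hnonpos).trans (Nat.cast_nonneg _)
  obtain ⟨S, hcard, hS⟩ := r.exists_isLogProdCover hn hL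
  rw [div_le_iff₀ hpos]
  calc (Set.ncard (show Set (List α) from r.lang) : ℝ)
      ≤ ∑ B ∈ S, (Set.ncard (show Set (List α) from B.lang) : ℝ) := by
        exact_mod_cast hS.ncard_le_sum
    _ ≤ S.card • h :=
        Finset.sum_le_card_nsmul S _ h fun B hB => hbound B (hS.1 B hB).1 (hS.1 B hB).2
    _ ≤ r.size * h := by rw [nsmul_eq_mul]; gcongr

/-- The log-product bound: if `L ⊆ Σ^n` is a homogeneous language (`n ≥ 1`) and
every log-product expression `B` with `L(B) ⊆ L` satisfies `|L(B)| ≤ h`, then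
every regular expression describing `L` has at least `|L|/h` nodes in its
syntax tree. -/
theorem logProduct_bound {α : Type} (n : ℕ) (hn : 1 ≤ n) (L : Language α)
    (hL : ∀ w ∈ L, w.length = n) (h : ℝ) (hh : 0 ≤ h)
    (hbound : ∀ B : RE α, RE.LogProd B → (∀ w ∈ B.lang, w ∈ L) →
      (Set.ncard (show Set (List α) from B.lang) : ℝ) ≤ h) :
    ∀ r : RE α, r.lang = L →
      (Set.ncard (show Set (List α) from L) : ℝ) / h ≤ (r.size : ℝ) :=
  logProduct_bound_general n hn L hL h hbound
end

section
/- For every log-product expression B of degree n and every real γ ≥ 1, there exist m ≥ log₂(1 + n/γ) and homogeneous expressions P_1,...,P_m, S_1,...,S_m such that L(B) = L(P_1)·L(P_2)···L(P_m)·L(S_m)···L(S_1), with deg P_i + deg S_i ≥ γ for all i ∈ [m−1] and deg P_m + deg S_m ≤ γ. -/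
/-!
A log-product expression is a letter wrapped successively in homogeneous factors, each attached on
the left or on the right and of degree at most that of what it wraps. Reading the wrappers from
the outside in, put them greedily into layers `(P_i, S_i)`, closing a layer as soon as its degree
reaches `γ`; once the remaining core fits into the open layer, it completes the last layer. If
`a < γ` is the weight already in the open layer, induction gives `n + a ≤ γ (2 ^ m - 1)`: a
wrapper `X` around `B₁` that closes a layer adds `a + deg X < γ + deg B₁`, so the bound doubles
with each layer.
-/

namespace RE
variable {α : Type}

theorem lang_nonempty_s5 (r : RE α) : r.lang.Nonempty := by
  induction r with
  | eps => exact ⟨[], rfl⟩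
  | char a => exact ⟨[a], rfl⟩
  | union r s ihr _ => exact ihr.mono fun w hw => (Language.mem_add _ _ _).2 (Or.inl hw)
  | cat r s ihr ihs =>
    obtain ⟨u, hu⟩ := ihr
    obtain ⟨v, hv⟩ := ihs
    exact ⟨u ++ v, Language.mem_mul.2 ⟨u, hu, v, hv, rfl⟩⟩

theorem homog_eps : (eps : RE α).Homog 0 := by
  rintro w rfl
  rfl

theorem homog_char (c : α) : (char c).Homog 1 := by
  rintro w rfl
  rfl

theorem Homog.cat {r s : RE α} {d e : ℕ} (hr : r.Homog d) (hs : s.Homog e) :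
    (r.cat s).Homog (d + e) := by
  intro w hw
  obtain ⟨u, hu, v, hv, rfl⟩ := Language.mem_mul.1 hw
  simp [hr u hu, hs v hv]

theorem Homog.unique {r : RE α} {d e : ℕ} (hd : r.Homog d) (he : r.Homog e) : d = e := by
  obtain ⟨w, hw⟩ := r.lang_nonempty_s5
  rw [← hd w hw, he w hw]

structure Layer (α : Type) where
  pre : RE α
  suf : RE α
  dpre : ℕ
  dsuf : ℕ
  homog_pre : pre.Homog dpre
  homog_suf : suf.Homog dsuf

def Layer.deg (l : Layer α) : ℕ := l.dpre + l.dsuf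

def nest : List (Layer α) → Language α
  | [] => 1
  | l :: L => l.pre.lang * nest L * l.suf.lang

theorem nest_eq_prod (L : List (Layer α)) :
    nest L = (L.map fun l => l.pre.lang).prod * (L.map fun l => l.suf.lang).reverse.prod := by
  induction L with
  | nil => simp [nest]
  | cons l L ih => simp [nest, ih, mul_assoc]

/-- `Saturated γ a ds`: every entry of `ds` but the last is at least `γ` and the last is at most
`γ`, where the first entry is counted together with a weight `a` carried over from outside. -/
inductive Saturated (γ : ℝ) : ℝ → List ℕ → Prop
  | last {a : ℝ} {d : ℕ} : a + d ≤ γ → Saturated γ a [d]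
  | cons {a : ℝ} {d : ℕ} {ds : List ℕ} : γ ≤ a + d → Saturated γ 0 ds → Saturated γ a (d :: ds)

namespace Saturated
variable {γ a : ℝ}

theorem ne_nil {ds : List ℕ} (h : Saturated γ a ds) : ds ≠ [] := by
  cases h <;> simp

theorem shift {x d : ℕ} {ds : List ℕ} (h : Saturated γ (a + x) (d :: ds)) :
    Saturated γ a ((x + d) :: ds) := by
  cases h with
  | last h => exact .last (by push_cast; linarith)
  | cons h hds => exact .cons (by push_cast; linarith) hds

theorem le_getElem {ds : List ℕ} (h : Saturated γ 0 ds) (i : ℕ) (hi : i + 1 < ds.length) :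
    γ ≤ ds[i] := by
  induction ds generalizing i with
  | nil => simp at hi
  | cons d ds ih =>
    cases h with
    | last _ => simp at hi
    | cons hd hds =>
      cases i with
      | zero => simpa using hd
      | succ i => simpa using ih hds i (by simpa using hi)

theorem getElem_le {ds : List ℕ} (h : Saturated γ 0 ds) (i : ℕ) (hi : i + 1 = ds.length) :
    ds[i]'(by omega) ≤ γ := by
  induction ds generalizing i with
  | nil => simp at hi
  | cons d ds ih =>
    cases h with
    | last hd =>
      obtain rfl : i = 0 := by simpa using hi
      simpa using hd
    | cons _ hds =>
      cases i with
      | zero => exact absurd (List.length_eq_zero_iff.1 (by simpa using hi.symm)) hds.ne_nil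
      | succ i => simpa using ih hds i (by simpa using hi)

end Saturated

def HasLayers (γ a : ℝ) (B : RE α) (n : ℕ) : Prop :=
  ∃ L : List (Layer α), B.lang = nest L ∧ Saturated γ a (L.map Layer.deg) ∧
    n + a ≤ γ * (2 ^ L.length - 1)

section HasLayers
variable {γ a : ℝ} {B : RE α} {n : ℕ}

theorem hasLayers_of_le (hB : B.Homog n) (h : n + a ≤ γ) : HasLayers γ a B n :=
  ⟨[⟨B, eps, n, 0, hB, homog_eps⟩], by simp [nest, lang], .last (by simp [Layer.deg]; linarith),
    by norm_num; linarith⟩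

theorem hasLayers_char (hγ : 1 ≤ γ) (ha : a < γ) (c : α) : HasLayers γ a (char c) 1 := by
  rcases le_or_gt (1 + a) γ with fit | overflow
  · exact hasLayers_of_le (homog_char c) (by simpa using fit)
  · refine ⟨[⟨char c, eps, 1, 0, homog_char c, homog_eps⟩, ⟨eps, eps, 0, 0, homog_eps, homog_eps⟩],
      by simp [nest, lang], .cons ?_ (.last ?_), ?_⟩
    · simp [Layer.deg]; linarith
    · simp [Layer.deg]; linarith
    · norm_num; linarith

/-- Unless `P · B₁ · S` fits into the open layer, `(P, S)` either closes that layer or is merged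
into the outermost layer of `B₁`. Doubling the number of layers pays for the new degree since
`deg P + deg S ≤ deg B₁`. -/
theorem hasLayers_wrap {B₁ P S : RE α} {d₁ dP dS : ℕ}
    (ih : ∀ a : ℝ, 0 ≤ a → a < γ → HasLayers γ a B₁ d₁) (hP : P.Homog dP) (hS : S.Homog dS)
    (hle : dP + dS ≤ d₁) (hB : B.Homog n) (hn : n = dP + d₁ + dS)
    (hlang : B.lang = P.lang * B₁.lang * S.lang) (ha0 : 0 ≤ a) (haγ : a < γ) :
    HasLayers γ a B n := by
  have hle' : (dP + dS : ℝ) ≤ d₁ := by exact_mod_cast hle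
  subst hn
  rcases le_or_gt ((dP + d₁ + dS : ℕ) + a) γ with fit | overflow
  · exact hasLayers_of_le hB fit
  rcases le_or_gt γ (a + (dP + dS : ℕ)) with close | extend
  · obtain ⟨L, hL, hsat, hbound⟩ := ih 0 le_rfl (by linarith)
    refine ⟨⟨P, S, dP, dS, hP, hS⟩ :: L, by rw [hlang, hL, nest], .cons close hsat, ?_⟩
    simp only [List.length_cons, pow_succ]
    push_cast at hbound ⊢
    linarith
  · obtain ⟨L, hL, hsat, hbound⟩ := ih (a + (dP + dS : ℕ)) (by positivity) extend
    obtain _ | ⟨l, L⟩ := L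
    · exact absurd rfl hsat.ne_nil
    let l' : Layer α :=
      ⟨P.cat l.pre, l.suf.cat S, dP + l.dpre, l.dsuf + dS, hP.cat l.homog_pre, l.homog_suf.cat hS⟩
    have hdeg : l'.deg = (dP + dS) + l.deg := by simp only [l', Layer.deg]; ring
    refine ⟨l' :: L, ?_, ?_, ?_⟩
    · simp only [hlang, hL, nest, lang, l', mul_assoc]
    · simpa [hdeg] using hsat.shift
    · push_cast at hbound ⊢
      simpa [add_assoc, add_comm, add_left_comm] using hbound

end HasLayers

theorem LogProd.hasLayers {γ a : ℝ} (hγ : 1 ≤ γ) {B : RE α} (hB : B.LogProd) {n : ℕ}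
    (hn : B.Homog n) (ha0 : 0 ≤ a) (haγ : a < γ) : HasLayers γ a B n := by
  induction hB generalizing n a with
  | char c =>
    obtain rfl := hn.unique (homog_char c)
    exact hasLayers_char hγ haγ c
  | catL _ hh₁ hh₂ hle ih =>
    refine hasLayers_wrap (fun a ha0 haγ => ih hh₁ ha0 haγ) homog_eps hh₂ (by simpa using hle) hn
      ?_ (by simp [lang]) ha0 haγ
    simpa using hn.unique (hh₁.cat hh₂)
  | catR _ hh₁ hh₂ hle ih =>
    refine hasLayers_wrap (fun a ha0 haγ => ih hh₁ ha0 haγ) hh₂ homog_eps (by simpa using hle) hn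
      ?_ (by simp [lang]) ha0 haγ
    simpa [add_comm] using hn.unique (hh₂.cat hh₁)

end RE

theorem Real.logb_two_one_add_div_le {x γ : ℝ} {m : ℕ} (hγ : 0 < γ) (hx : 0 ≤ x)
    (h : x ≤ γ * (2 ^ m - 1)) : Real.logb 2 (1 + x / γ) ≤ m := by
  rw [Real.logb_le_iff_le_rpow (by norm_num) (by positivity), Real.rpow_natCast]
  have : x / γ ≤ 2 ^ m - 1 := (div_le_iff₀ hγ).2 (by linarith)
  linarith

/-- The `γ`-factorization: for every log-product expression `B` of degree `n`
and every real `γ ≥ 1` there exist `m ≥ log₂(1 + n/γ)` and homogeneous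
expressions `P₁, …, P_m, S₁, …, S_m` with
`L(B) = L(P₁)·L(P₂)⋯L(P_m)·L(S_m)⋯L(S₁)`, where
`deg P_i + deg S_i ≥ γ` for all `i ∈ [m−1]` and `deg P_m + deg S_m ≤ γ`. -/
theorem logProd_gamma_factorization {α : Type} (B : RE α) (n : ℕ)
    (hB : RE.LogProd B) (hhom : B.Homog n) (γ : ℝ) (hγ : 1 ≤ γ) :
    ∃ (m : ℕ) (P S : Fin m → RE α) (dP dS : Fin m → ℕ),
      Real.logb 2 (1 + (n : ℝ) / γ) ≤ (m : ℝ) ∧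
      (∀ i, (P i).Homog (dP i)) ∧ (∀ i, (S i).Homog (dS i)) ∧
      B.lang = (List.ofFn fun i => (P i).lang).prod *
        ((List.ofFn fun i => (S i).lang).reverse.prod) ∧
      (∀ i : Fin m, (i : ℕ) + 1 < m → γ ≤ ((dP i + dS i : ℕ) : ℝ)) ∧
      (∀ i : Fin m, (i : ℕ) + 1 = m → ((dP i + dS i : ℕ) : ℝ) ≤ γ) := by
  obtain ⟨L, hL, hsat, hbound⟩ := hB.hasLayers hγ hhom le_rfl (by linarith)
  refine ⟨L.length, fun i => L[(i : ℕ)].pre, fun i => L[(i : ℕ)].suf, fun i => L[(i : ℕ)].dpre,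
    fun i => L[(i : ℕ)].dsuf,
    Real.logb_two_one_add_div_le (by linarith) n.cast_nonneg (by simpa using hbound),
    fun i => L[(i : ℕ)].homog_pre, fun i => L[(i : ℕ)].homog_suf, ?_, fun i hi => ?_, fun i hi => ?_⟩
  · rw [hL, RE.nest_eq_prod, List.ofFn_getElem_eq_map L fun l => l.pre.lang,
      List.ofFn_getElem_eq_map L fun l => l.suf.lang]
  · simpa [RE.Layer.deg] using hsat.le_getElem i (by simpa using hi)
  · simpa [RE.Layer.deg] using hsat.getElem_le i (by simpa using hi)
end

section
/- Every finite language over a k-letter alphabet accepted by a layered NFA of width ω, length n, and f final states can be described by a regular expression of length O(f·k·n·ω·ω^{log₂ n}). -/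
open Finset

theorem Language.mem_sum {α ι : Type*} {s : Finset ι} {l : ι → Language α} {x : List α} :
    x ∈ ∑ i ∈ s, l i ↔ ∃ i ∈ s, x ∈ l i := by
  classical
  induction s using Finset.induction_on with
  | empty => simp
  | insert a s ha ih => simp [sum_insert ha, Language.mem_add, ih]

namespace RE
variable {α : Type}

theorem size_pos (r : RE α) : 0 < r.size := by
  cases r <;> simp [size]

/-- `none` stands for the empty language, which `RE` cannot express. -/
def optLang : Option (RE α) → Language α
  | none => 0
  | some r => r.lang

def optSize : Option (RE α) → ℕ
  | none => 0
  | some r => r.size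

def optUnion : Option (RE α) → Option (RE α) → Option (RE α)
  | none, e => e
  | some r, none => some r
  | some r, some s => some (union r s)

def optCat : Option (RE α) → Option (RE α) → Option (RE α)
  | some r, some s => some (cat r s)
  | _, _ => none

noncomputable def optSum {ι : Type*} (s : Finset ι) (g : ι → Option (RE α)) : Option (RE α) :=
  (s.toList.map g).foldr optUnion none

theorem optLang_optUnion (e e' : Option (RE α)) :
    optLang (optUnion e e') = optLang e + optLang e' := by
  rcases e with _ | r <;> rcases e' with _ | s <;> simp [optUnion, optLang, lang]

theorem optLang_optCat (e e' : Option (RE α)) :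
    optLang (optCat e e') = optLang e * optLang e' := by
  rcases e with _ | r <;> rcases e' with _ | s <;> simp [optCat, optLang, lang]

theorem optSize_optCat_le (e e' : Option (RE α)) :
    optSize (optCat e e') ≤ optSize e + optSize e' + 1 := by
  rcases e with _ | r <;> rcases e' with _ | s <;> simp [optCat, optSize, size]

theorem optLang_optSum {ι : Type*} (s : Finset ι) (g : ι → Option (RE α)) :
    optLang (optSum s g) = ∑ i ∈ s, optLang (g i) := by
  rw [optSum, ← sum_map_toList]
  induction s.toList with
  | nil => rfl
  | cons i l ih => simp [optLang_optUnion, ih]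

theorem optSize_foldr_optUnion_le (l : List (Option (RE α))) :
    optSize (l.foldr optUnion none) ≤ (l.map (optSize · + 1)).sum - 1 := by
  induction l with
  | nil => simp [optSize]
  | cons e l ih =>
    rcases e with _ | r
    · simp only [List.foldr_cons, optUnion, List.map_cons, List.sum_cons]
      omega
    · rcases h : l.foldr optUnion none with _ | s
      · simp [h, optUnion, optSize]
      · have := s.size_pos
        simp only [List.foldr_cons, h, optUnion, optSize, size, List.map_cons,
          List.sum_cons] at ih ⊢
        omega

theorem optSize_optSum_le {ι : Type*} (s : Finset ι) (g : ι → Option (RE α)) :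
    optSize (optSum s g) ≤ ∑ i ∈ s, (optSize (g i) + 1) - 1 := by
  simpa [optSum, List.map_map, Function.comp_def, sum_map_toList]
    using optSize_foldr_optUnion_le (s.toList.map g)

end RE

namespace NFA
variable {α : Type} {σ : Type*} (M : NFA α σ)

def IsLayering (layer : σ → ℕ) : Prop :=
  ∀ q a q', q' ∈ M.step q a → layer q' = layer q + 1

def reachLang (S : Set σ) (q : σ) (m : ℕ) : Language α :=
  {w | w.length = m ∧ q ∈ M.evalFrom S w}

variable {M} {layer : σ → ℕ}

@[simp]
theorem mem_reachLang {S : Set σ} {q : σ} {m : ℕ} {w : List α} :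
    w ∈ M.reachLang S q m ↔ w.length = m ∧ q ∈ M.evalFrom S w :=
  Iff.rfl

theorem IsLayering.layer_eq_of_mem_evalFrom (hM : M.IsLayering layer) {p q : σ} {w : List α}
    (hq : q ∈ M.evalFrom {p} w) : layer q = layer p + w.length := by
  induction w generalizing p with
  | nil => simp_all
  | cons a w ih =>
    rw [evalFrom_cons, stepSet_singleton, mem_evalFrom_iff_exists] at hq
    obtain ⟨r, hr, hq⟩ := hq
    rw [ih hq, hM p a r hr, List.length_cons]
    omega

theorem reachLang_zero (S : Set σ) (q : σ) [Decidable (q ∈ S)] :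
    M.reachLang S q 0 = if q ∈ S then 1 else 0 := by
  ext w
  rcases w with _ | ⟨a, w⟩ <;> split_ifs <;> simp_all [Language.mem_one]

theorem reachLang_one [Fintype α] (S : Set σ) (q : σ) [DecidablePred (q ∈ M.stepSet S ·)] :
    M.reachLang S q 1 = ∑ a ∈ univ.filter (q ∈ M.stepSet S ·), {[a]} := by
  ext w
  simp only [Language.mem_sum, mem_reachLang, List.length_eq_one_iff]
  constructor
  · rintro ⟨⟨a, rfl⟩, hq⟩
    exact ⟨a, by simpa using hq, rfl⟩
  · rintro ⟨a, ha, rfl⟩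
    exact ⟨⟨a, rfl⟩, by simpa using ha⟩

theorem IsLayering.reachLang_add [Fintype σ] (hM : M.IsLayering layer) (S : Set σ) (q : σ)
    (m₁ m₂ : ℕ) :
    M.reachLang S q (m₁ + m₂) = ∑ r ∈ univ.filter (fun r => layer r + m₂ = layer q),
      M.reachLang S r m₁ * M.reachLang {r} q m₂ := by
  ext w
  simp only [Language.mem_sum, Language.mem_mul, mem_reachLang, mem_filter, mem_univ, true_and]
  constructor
  · rintro ⟨hw, hq⟩
    rw [← List.take_append_drop m₁ w, evalFrom_append, mem_evalFrom_iff_exists] at hq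
    obtain ⟨r, hr, hq⟩ := hq
    refine ⟨r, ?_, _, ⟨by simp; omega, hr⟩, _, ⟨by simp; omega, hq⟩, List.take_append_drop m₁ w⟩
    rw [hM.layer_eq_of_mem_evalFrom hq]
    simp; omega
  · rintro ⟨r, -, u, ⟨hu, hr⟩, v, ⟨hv, hq⟩, rfl⟩
    refine ⟨by simp [hu, hv], ?_⟩
    rw [evalFrom_append, mem_evalFrom_iff_exists]
    exact ⟨r, hr, hq⟩

theorem IsLayering.accepts_eq_sum_reachLang [Fintype σ] [DecidablePred (· ∈ M.accept)]
    (hM : M.IsLayering layer) (hstart : ∀ q ∈ M.start, layer q = 0) :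
    M.accepts = ∑ q ∈ univ.filter (· ∈ M.accept), M.reachLang M.start q (layer q) := by
  ext w
  simp only [mem_accepts, Language.mem_sum, mem_filter, mem_univ, true_and, mem_reachLang]
  refine exists_congr fun q => and_congr_right fun _ => ⟨fun hq => ⟨?_, hq⟩, And.right⟩
  obtain ⟨p, hp, hq⟩ := mem_evalFrom_iff_exists.mp hq
  rw [hM.layer_eq_of_mem_evalFrom hq, hstart p hp, zero_add]

variable (M layer) in
open Classical in
/-- `t` bounds the recursion depth: the expression describes `M.reachLang S q m` once
`m ≤ 2 ^ t`. -/
noncomputable def reachRE [Fintype α] [Fintype σ] : ℕ → Set σ → σ → ℕ → Option (RE α)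
  | 0, S, q, 0 => if q ∈ S then some .eps else none
  | 0, S, q, _ + 1 => RE.optSum (univ.filter (q ∈ M.stepSet S ·)) (some ∘ .char)
  | t + 1, S, q, m => RE.optSum (univ.filter fun r => layer r + m / 2 = layer q)
      fun r => RE.optCat (reachRE t S r (m - m / 2)) (reachRE t {r} q (m / 2))

open RE

theorem IsLayering.optLang_reachRE [Fintype α] [Fintype σ] (hM : M.IsLayering layer) (t : ℕ) :
    ∀ S q m, m ≤ 2 ^ t → optLang (M.reachRE layer t S q m) = M.reachLang S q m := by
  classical
  induction t with
  | zero =>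
    rintro S q (_ | _ | m) hm
    · rw [reachRE, reachLang_zero]
      split_ifs <;> rfl
    · rw [reachRE, optLang_optSum, reachLang_one]
      rfl
    · simp at hm
  | succ t ih =>
    intro S q m hm
    rw [reachRE, optLang_optSum, ← Nat.sub_add_cancel (Nat.div_le_self m 2), hM.reachLang_add,
      Nat.sub_add_cancel (Nat.div_le_self m 2)]
    refine sum_congr rfl fun r _ => ?_
    rw [optLang_optCat, ih, ih] <;> rw [pow_succ] at hm <;> omega

theorem optSize_reachRE_lt [Fintype α] [Fintype σ] {ω : ℕ} (hω : 1 ≤ ω)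
    (hwidth : ∀ j, {q | layer q = j}.ncard ≤ ω) (t : ℕ) (S : Set σ) (q : σ) (m : ℕ) :
    optSize (M.reachRE layer t S q m) < (2 * Fintype.card α + 2) * (2 * ω) ^ t := by
  classical
  induction t generalizing S q m with
  | zero =>
    rcases m with _ | m
    · rw [reachRE]
      split_ifs <;> simp [optSize, size]
    · rw [reachRE]
      have hcard := card_le_univ (univ.filter (q ∈ M.stepSet S ·))
      calc _ ≤ ∑ a ∈ univ.filter (q ∈ M.stepSet S ·), (optSize (some (char a)) + 1) - 1 :=
            optSize_optSum_le _ _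
        _ < _ := by simp only [optSize, size, sum_const, smul_eq_mul, pow_zero]; omega
  | succ t ih =>
    rw [reachRE]
    set P := (2 * Fintype.card α + 2) * (2 * ω) ^ t
    have hP : 1 ≤ P := Nat.one_le_iff_ne_zero.mpr (by positivity)
    have hcard : (univ.filter fun r => layer r + m / 2 = layer q).card ≤ ω := by
      calc _ ≤ {r | layer r = layer q - m / 2}.ncard := by
            rw [← Set.ncard_coe_finset]
            exact Set.ncard_le_ncard (fun r hr => by simp at hr ⊢; omega)
        _ ≤ ω := hwidth _
    have hterm : ∀ r, optSize (optCat (M.reachRE layer t S r (m - m / 2))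
        (M.reachRE layer t {r} q (m / 2))) + 1 ≤ 2 * P := fun r => by
      have := optSize_optCat_le (M.reachRE layer t S r (m - m / 2))
        (M.reachRE layer t {r} q (m / 2))
      have := ih S r (m - m / 2)
      have := ih {r} q (m / 2)
      omega
    have hsum := (optSize_optSum_le _ _).trans (Nat.sub_le_sub_right
      (sum_le_card_nsmul (univ.filter fun r => layer r + m / 2 = layer q) _ _
        fun r _ => hterm r) 1)
    rw [smul_eq_mul] at hsum
    calc _ ≤ _ := hsum
      _ ≤ ω * (2 * P) - 1 := Nat.sub_le_sub_right (Nat.mul_le_mul_right _ hcard) 1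
      _ < ω * (2 * P) := Nat.sub_lt (Nat.mul_pos (by omega) (by omega)) one_pos
      _ = (2 * Fintype.card α + 2) * (2 * ω) ^ (t + 1) := by ring

theorem IsLayering.exists_optLang_eq_accepts [Fintype α] [Fintype σ] (hM : M.IsLayering layer)
    (hstart : ∀ q ∈ M.start, layer q = 0) {ω : ℕ} (hω : 1 ≤ ω)
    (hwidth : ∀ j, {q | layer q = j}.ncard ≤ ω) {t : ℕ} (hacc : ∀ q ∈ M.accept, layer q ≤ 2 ^ t) :
    ∃ e : Option (RE α), optLang e = M.accepts ∧
      optSize e ≤ M.accept.ncard * ((2 * Fintype.card α + 2) * (2 * ω) ^ t) := by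
  classical
  refine ⟨optSum (univ.filter (· ∈ M.accept)) fun q => M.reachRE layer t M.start q (layer q),
    ?_, ?_⟩
  · rw [optLang_optSum, hM.accepts_eq_sum_reachLang hstart]
    exact sum_congr rfl fun q hq => hM.optLang_reachRE t _ _ _ (hacc q (mem_filter.mp hq).2)
  · have hcard : (univ.filter (· ∈ M.accept)).card = M.accept.ncard := by
      simp [← Set.ncard_coe_finset]
    calc _ ≤ _ := optSize_optSum_le _ _
      _ ≤ (univ.filter (· ∈ M.accept)).card * ((2 * Fintype.card α + 2) * (2 * ω) ^ t) :=
        (Nat.sub_le _ _).trans <| by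
          rw [← smul_eq_mul]
          exact sum_le_card_nsmul _ _ _ fun q _ => optSize_reachRE_lt hω hwidth t M.start q _
      _ = _ := by rw [hcard]

end NFA

theorem pow_clog_le_mul_rpow_logb {x : ℝ} (hx : 1 ≤ x) {n : ℕ} (hn : 1 ≤ n) :
    x ^ Nat.clog 2 n ≤ x * x ^ Real.logb 2 n := by
  have ht : (Nat.clog 2 n : ℝ) ≤ Real.logb 2 n + 1 := by
    have := Nat.ceil_lt_add_one (Real.logb_nonneg one_lt_two (Nat.one_le_cast.mpr hn))
    rw [← Nat.cast_ofNat, Real.natCeil_logb_natCast] at this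
    exact_mod_cast this.le
  calc x ^ Nat.clog 2 n = x ^ (Nat.clog 2 n : ℝ) := (Real.rpow_natCast x _).symm
    _ ≤ x ^ (Real.logb 2 n + 1) := Real.rpow_le_rpow_of_exponent_le hx ht
    _ = x * x ^ Real.logb 2 n := by rw [Real.rpow_add (by linarith), Real.rpow_one, mul_comm]

theorem two_mul_add_two_mul_pow_clog_le {k n ω : ℕ} (hk : 1 ≤ k) (hn : 1 ≤ n) (hω : 1 ≤ ω) :
    (((2 * k + 2) * (2 * ω) ^ Nat.clog 2 n : ℕ) : ℝ) ≤
      8 * k * n * ω * (ω : ℝ) ^ Real.logb 2 n := by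
  have h2 := pow_clog_le_mul_rpow_logb one_le_two hn
  rw [Real.rpow_logb two_pos (by norm_num) (by exact_mod_cast hn)] at h2
  have hωt := pow_clog_le_mul_rpow_logb (Nat.one_le_cast.mpr hω) hn
  have hk' : (2 * k + 2 : ℝ) ≤ 4 * k := by linarith [(Nat.one_le_cast (α := ℝ)).mpr hk]
  calc _ = (2 * k + 2 : ℝ) * (2 ^ Nat.clog 2 n * (ω : ℝ) ^ Nat.clog 2 n) := by push_cast; ring
    _ ≤ (4 * k) * ((2 * n) * (ω * (ω : ℝ) ^ Real.logb 2 n)) := by gcongr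
    _ = 8 * k * n * ω * (ω : ℝ) ^ Real.logb 2 n := by ring

/-- Conversion of layered NFAs: every (nonempty) finite language over a
`k`-letter alphabet accepted by a layered NFA of width `ω`, length `n` and `f`
final states can be described by a regular expression of length
`O(f·k·n·ω·ω^{log₂ n})`. -/
theorem layered_nfa_to_re :
    ∃ C : ℝ, 0 < C ∧
      ∀ (k n ω f : ℕ) (σ : Type) (_ : Fintype σ) (M : NFA (Fin k) σ)
        (layer : σ → ℕ),
        1 ≤ k → 1 ≤ n →
        (∀ q a q', q' ∈ M.step q a → layer q' = layer q + 1) →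
        (∀ q ∈ M.start, layer q = 0) →
        (∀ j, Set.ncard {q | layer q = j} ≤ ω) →
        (∀ q ∈ M.accept, layer q ≤ n) →
        Set.ncard M.accept ≤ f →
        (∃ w, w ∈ M.accepts) →
        ∃ r : RE (Fin k), r.lang = M.accepts ∧
          (r.size : ℝ) ≤ C * f * k * n * ω * (ω : ℝ) ^ Real.logb 2 (n : ℝ) := by
  refine ⟨8, by norm_num, ?_⟩
  intro k n ω f σ _ M layer hk hn (hM : M.IsLayering layer) hstart hwidth hacc hf ⟨w, hw⟩
  obtain ⟨q₀, -, hq₀⟩ := NFA.mem_accepts.mp hw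
  obtain ⟨p₀, hp₀, -⟩ := NFA.mem_evalFrom_iff_exists.mp hq₀
  have hω : 1 ≤ ω :=
    ((Set.ncard_pos (Set.toFinite {q | layer q = 0})).mpr ⟨p₀, hstart p₀ hp₀⟩).trans_le (hwidth 0)
  obtain ⟨_ | r, he, hsize⟩ := hM.exists_optLang_eq_accepts hstart hω hwidth
    fun q hq => (hacc q hq).trans (Nat.le_pow_clog one_lt_two n)
  · rw [← he] at hw
    exact absurd hw (Language.notMem_zero w)
  refine ⟨r, he, ?_⟩
  rw [Fintype.card_fin] at hsize
  calc (r.size : ℝ) ≤ f * (((2 * k + 2) * (2 * ω) ^ Nat.clog 2 n : ℕ) : ℝ) := by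
        exact_mod_cast hsize.trans (Nat.mul_le_mul_right _ hf)
    _ ≤ f * (8 * k * n * ω * (ω : ℝ) ^ Real.logb 2 n) := by
        gcongr
        exact two_mul_add_two_mul_pow_clog_le hk hn hω
    _ = 8 * f * k * n * ω * (ω : ℝ) ^ Real.logb 2 n := by ring
end

section
/- Let k ≥ 2 and n be even. The number of words w ∈ {1,...,k}^n in which every letter occurs an even number of times is at least k^n · 2^{1−k}. -/
/-!
Each subset `S` of the alphabet gives a sign character `χ_S`, equal to `-1` on `S` and `1` off it.
Expanding `∑_S (∑_a χ_S a)^n` over words `w` of length `n` gives `∑_w ∏_a (1 + (-1)^{|w|_a})`,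
and the product is `2^k` when every count is even and `0` otherwise; so the sum is
`2^k · |L|`. For even `n` every summand `(∑_a χ_S a)^n` is nonnegative, and `S = ∅` and
`S = [k]` alone contribute `2 k^n`.
-/

open Finset

variable {α : Type*}

lemma prod_one_add_neg_one_pow [Fintype α] (c : α → ℕ) :
    ∏ a, (1 + (-1 : ℤ) ^ c a) = if ∀ a, Even (c a) then 2 ^ Fintype.card α else 0 := by
  split_ifs with h
  · rw [prod_congr rfl fun a _ => by rw [(h a).neg_one_pow], prod_const, card_univ]
    norm_num
  · push Not at h
    obtain ⟨a, ha⟩ := h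
    exact prod_eq_zero (mem_univ a) (by rw [(Nat.not_even_iff_odd.1 ha).neg_one_pow]; norm_num)

variable [DecidableEq α]

def signChar (S : Finset α) (a : α) : ℤ := if a ∈ S then -1 else 1

lemma prod_map_signChar (S : Finset α) (w : List α) :
    (w.map (signChar S)).prod = ∏ a ∈ S, (-1) ^ w.count a := by
  induction w with
  | nil => simp
  | cons b w ih =>
    simp only [List.map_cons, List.prod_cons, ih, List.count_cons, pow_add, prod_mul_distrib,
      beq_iff_eq, pow_ite, pow_one, pow_zero, prod_ite_eq, signChar]
    ring

variable [Fintype α]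

lemma sum_prod_map_signChar (w : List α) :
    ∑ S : Finset α, (w.map (signChar S)).prod = ∏ a, (1 + (-1) ^ w.count a) := by
  simp_rw [prod_map_signChar, prod_one_add, powerset_univ]

variable (α) in
def evenCountWords (n : ℕ) : Finset (Fin n → α) :=
  {g | ∀ a, Even ((List.ofFn g).count a)}

lemma sum_sum_signChar_pow (n : ℕ) :
    ∑ S : Finset α, (∑ a, signChar S a) ^ n = 2 ^ Fintype.card α * #(evenCountWords α n) := by
  simp_rw [Fintype.sum_pow]
  rw [sum_comm]
  simp_rw [← Function.comp_apply (f := signChar _), ← List.prod_ofFn, ← List.map_ofFn,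
    sum_prod_map_signChar, prod_one_add_neg_one_pow]
  rw [sum_ite, sum_const, sum_const_zero, nsmul_eq_mul, add_zero, mul_comm]
  rfl

lemma two_mul_card_pow_le_sum_sum_signChar_pow [Nonempty α] {n : ℕ} (hn : Even n) :
    2 * (Fintype.card α : ℤ) ^ n ≤ ∑ S : Finset α, (∑ a, signChar S a) ^ n := by
  have h_empty : ∑ a, signChar (∅ : Finset α) a = Fintype.card α := by simp [signChar]
  have h_univ : ∑ a, signChar (univ : Finset α) a = -Fintype.card α := by simp [signChar]
  calc 2 * (Fintype.card α : ℤ) ^ n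
      = ∑ S ∈ {∅, univ}, (∑ a, signChar S a) ^ n := by
        rw [sum_pair univ_nonempty.ne_empty.symm, h_empty, h_univ, hn.neg_pow, two_mul]
    _ ≤ ∑ S : Finset α, (∑ a, signChar S a) ^ n :=
        sum_le_sum_of_subset_of_nonneg (subset_univ _) fun _ _ _ => hn.pow_nonneg _

lemma two_mul_card_pow_le_two_pow_mul_card_evenCountWords [Nonempty α] {n : ℕ} (hn : Even n) :
    2 * Fintype.card α ^ n ≤ 2 ^ Fintype.card α * #(evenCountWords α n) := by
  have := two_mul_card_pow_le_sum_sum_signChar_pow (α := α) hn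
  rw [sum_sum_signChar_pow] at this
  exact_mod_cast this

lemma ncard_evenCount_lists (n : ℕ) :
    {w : List α | w.length = n ∧ ∀ a, Even (w.count a)}.ncard = #(evenCountWords α n) := by
  have h_image : {w : List α | w.length = n ∧ ∀ a, Even (w.count a)} =
      List.ofFn '' (evenCountWords α n : Set (Fin n → α)) := by
    ext w
    constructor
    · rintro ⟨rfl, hw⟩
      exact ⟨w.get, by simpa [evenCountWords] using hw, List.ofFn_get w⟩
    · rintro ⟨g, hg, rfl⟩
      exact ⟨List.length_ofFn, by simpa [evenCountWords] using hg⟩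
  rw [h_image, Set.ncard_image_of_injective _ List.ofFn_injective, Set.ncard_coe_finset]

/-- For `k ≥ 2` and even `n`, the number of words `w ∈ [k]^n` in which every
letter occurs an even number of times is at least `k^n · 2^{1−k}`. -/
theorem parity_language_count_lower (k n : ℕ) (hk : 2 ≤ k) (hn : Even n) :
    (k : ℝ) ^ n * (2 : ℝ) ^ ((1 : ℤ) - (k : ℤ)) ≤
      (Set.ncard {w : List (Fin k) | w.length = n ∧ ∀ j : Fin k, Even (w.count j)} : ℝ) := by
  have : Nonempty (Fin k) := ⟨⟨0, by omega⟩⟩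
  have h_count : 2 * k ^ n ≤ 2 ^ k * #(evenCountWords (Fin k) n) := by
    simpa using two_mul_card_pow_le_two_pow_mul_card_evenCountWords (α := Fin k) hn
  rw [ncard_evenCount_lists, zpow_sub₀ two_ne_zero, zpow_one, zpow_natCast, mul_div,
    div_le_iff₀ (by positivity), mul_comm _ (2 : ℝ), mul_comm _ ((2 : ℝ) ^ k)]
  exact_mod_cast h_count
end

section
/- Let k ≥ 2, n ≥ k·ln k, and q ∈ {0,1}^k. The number of words w ∈ {1,...,k}^n such that |w|_j ≡ q_j (mod 2) for all j ∈ [k] is at most k^n · 2^{2−k}. -/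
/-!
Expanding the indicator of the parity class of a word `w` as
`2⁻ᵏ ∏ₐ (1 + (-1) ^ (|w|ₐ + qₐ))` turns the count into a character sum over `(ℤ/2)ᵏ`:
`2ᵏ N = ∑_{S ⊆ [k]} ± (k - 2|S|)ⁿ`. Using `1 - x ≤ e⁻ˣ` and `n ≥ k ln k`, each term is at most
`kⁿ (k^(-2|S|) + k^(-2(k-|S|)))`, and summing over `S` gives
`2 kⁿ (1 + k⁻²)ᵏ ≤ 2 e^(1/k) kⁿ ≤ 4 kⁿ`.
-/

open Finset

theorem List.count_ofFn {α : Type*} [DecidableEq α] {n : ℕ} (w : Fin n → α) (a : α) :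
    (List.ofFn w).count a = #{i | w i = a} := by
  simpa using (Fin.card_filter_univ_eq_vector_get_eq_count a (List.Vector.ofFn w)).symm

lemma one_add_neg_one_pow_add_ite (c : ℕ) (b : Bool) :
    1 + (-1 : ℝ) ^ (c + if b then 1 else 0) = if c % 2 = (if b then 1 else 0) then 2 else 0 := by
  rw [neg_one_pow_eq_pow_mod_two]
  rcases Nat.mod_two_eq_zero_or_one c with hc | hc <;> cases b <;> simp [Nat.add_mod, hc] <;>
    norm_num

section ParityClass

variable {α : Type*} [DecidableEq α]

lemma prod_neg_one_pow_card_fiber {n : ℕ} (S : Finset α) (w : Fin n → α) :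
    ∏ a ∈ S, (-1 : ℝ) ^ #{i | w i = a} = ∏ i, if w i ∈ S then -1 else 1 := by
  rw [← prod_filter, ← prod_fiberwise_eq_prod_filter' _ _ _ (fun _ ↦ (-1 : ℝ))]
  simp only [prod_const]

variable [Fintype α]

def parityClass (n : ℕ) (q : α → Bool) : Finset (Fin n → α) :=
  {w | ∀ a, #{i | w i = a} % 2 = if q a then 1 else 0}

theorem ncard_setOf_length_count_mod_two (n : ℕ) (q : α → Bool) :
    {w : List α | w.length = n ∧ ∀ a, w.count a % 2 = if q a then 1 else 0}.ncard =
      #(parityClass n q) := by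
  have hset : {w : List α | w.length = n ∧ ∀ a, w.count a % 2 = if q a then 1 else 0} =
      List.ofFn '' (parityClass n q : Set (Fin n → α)) := by
    ext w
    simp only [Set.mem_ofPred_eq, Set.mem_image, mem_coe, parityClass, mem_filter, mem_univ,
      true_and]
    constructor
    · rintro ⟨rfl, hw⟩
      exact ⟨w.get, fun a ↦ by rw [← List.count_ofFn, List.ofFn_get]; exact hw a, List.ofFn_get w⟩
    · rintro ⟨v, hv, rfl⟩
      exact ⟨List.length_ofFn, fun a ↦ List.count_ofFn v a ▸ hv a⟩
  rw [hset, Set.ncard_image_of_injective _ List.ofFn_injective, Set.ncard_coe_finset]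

lemma prod_one_add_neg_one_pow_s12 {n : ℕ} (q : α → Bool) (w : Fin n → α) :
    ∏ a, (1 + (-1 : ℝ) ^ (#{i | w i = a} + if q a then 1 else 0)) =
      if w ∈ parityClass n q then 2 ^ Fintype.card α else 0 := by
  simp only [one_add_neg_one_pow_add_ite, Fintype.prod_ite_zero, prod_const, card_univ,
    parityClass, mem_filter, mem_univ, true_and]

lemma sum_ite_mem_neg_one_one (S : Finset α) :
    ∑ a, (if a ∈ S then -1 else 1 : ℝ) = Fintype.card α - 2 * #S := by
  simp only [sum_ite, subset_univ, filter_mem_eq_of_subset, sum_const, ← compl_filter, card_compl,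
    nsmul_eq_mul, Nat.cast_sub (card_le_univ S)]
  ring

theorem two_pow_card_mul_card_parityClass (n : ℕ) (q : α → Bool) :
    2 ^ Fintype.card α * (#(parityClass n q) : ℝ) =
      ∑ S ∈ univ.powerset, (-1) ^ #{a ∈ S | q a} * (Fintype.card α - 2 * #S : ℝ) ^ n := by
  calc 2 ^ Fintype.card α * (#(parityClass n q) : ℝ)
      = ∑ w : Fin n → α, ∏ a, (1 + (-1 : ℝ) ^ (#{i | w i = a} + if q a then 1 else 0)) := by
        simp only [prod_one_add_neg_one_pow_s12, sum_ite_mem, univ_inter, sum_const, nsmul_eq_mul,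
          mul_comm]
    _ = ∑ w : Fin n → α, ∑ S ∈ univ.powerset,
          (-1 : ℝ) ^ #{a ∈ S | q a} * ∏ i, if w i ∈ S then -1 else 1 := by
        refine sum_congr rfl fun w _ ↦ ?_
        rw [prod_one_add]
        refine sum_congr rfl fun S _ ↦ ?_
        rw [← prod_neg_one_pow_card_fiber]
        simp_rw [pow_add, prod_mul_distrib, prod_pow_eq_pow_sum S (fun a ↦ if q a then 1 else 0),
          sum_boole, Nat.cast_id, mul_comm]
    _ = _ := by
        rw [sum_comm]
        refine sum_congr rfl fun S _ ↦ ?_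
        rw [← mul_sum, ← sum_ite_mem_neg_one_one, Fintype.sum_pow]

end ParityClass

section Bounds

open Real

variable {k n : ℕ}

lemma sub_two_mul_pow_le (hk : 0 < k) (hn : k * log k ≤ n) {c : ℕ} (hc : 2 * c ≤ k) :
    ((k : ℝ) - 2 * c) ^ n ≤ k ^ n * ((k : ℝ) ^ 2)⁻¹ ^ c := by
  have hk' : (0 : ℝ) < k := by exact_mod_cast hk
  have hc' : (2 * c : ℝ) ≤ k := by exact_mod_cast hc
  have hexp : exp (-(2 * c / k)) ^ n ≤ ((k : ℝ) ^ 2)⁻¹ ^ c := calc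
    exp (-(2 * c / k)) ^ n = exp (-(2 * c / k * n)) := by rw [← exp_nat_mul]; ring_nf
    _ ≤ exp (-(2 * c / k * (k * log k))) := by gcongr
    _ = ((k : ℝ) ^ 2)⁻¹ ^ c := by
        rw [show -(2 * c / k * (k * log k)) = c * -log (k ^ 2) by rw [log_pow]; field_simp; ring,
          exp_nat_mul, exp_neg, exp_log (by positivity)]
  calc ((k : ℝ) - 2 * c) ^ n = k ^ n * (1 - 2 * c / k) ^ n := by rw [← mul_pow]; field_simp
    _ ≤ k ^ n * exp (-(2 * c / k)) ^ n := by
        gcongr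
        · rw [sub_nonneg, div_le_one hk']; exact hc'
        · exact one_sub_le_exp_neg _
    _ ≤ _ := by gcongr

lemma abs_sub_two_mul_pow_le (hk : 0 < k) (hn : k * log k ≤ n) {c : ℕ} (hc : c ≤ k) :
    |(k : ℝ) - 2 * c| ^ n ≤ k ^ n * (((k : ℝ) ^ 2)⁻¹ ^ c + ((k : ℝ) ^ 2)⁻¹ ^ (k - c)) := by
  rcases le_total (2 * c) k with h | h
  · calc |(k : ℝ) - 2 * c| ^ n = ((k : ℝ) - 2 * c) ^ n := by
          rw [abs_of_nonneg (by rw [sub_nonneg]; exact_mod_cast h)]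
      _ ≤ k ^ n * ((k : ℝ) ^ 2)⁻¹ ^ c := sub_two_mul_pow_le hk hn h
      _ ≤ _ := by gcongr; exact le_add_of_nonneg_right (by positivity)
  · calc |(k : ℝ) - 2 * c| ^ n = ((k : ℝ) - 2 * (k - c : ℕ)) ^ n := by
          rw [abs_of_nonpos (by rw [sub_nonpos]; exact_mod_cast h), Nat.cast_sub hc]; ring_nf
      _ ≤ k ^ n * ((k : ℝ) ^ 2)⁻¹ ^ (k - c) := sub_two_mul_pow_le hk hn (by omega)
      _ ≤ _ := by gcongr; exact le_add_of_nonneg_left (by positivity)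

lemma one_add_inv_sq_pow_le_two (hk : 2 ≤ k) : (1 + ((k : ℝ) ^ 2)⁻¹) ^ k ≤ 2 := by
  have hk' : (2 : ℝ) ≤ k := by exact_mod_cast hk
  calc (1 + ((k : ℝ) ^ 2)⁻¹) ^ k ≤ exp (((k : ℝ) ^ 2)⁻¹) ^ k := by
        gcongr; linarith [add_one_le_exp ((k : ℝ) ^ 2)⁻¹]
    _ = exp (k⁻¹) := by rw [← exp_nat_mul]; field_simp
    _ ≤ exp (1 / 2) := by gcongr; rw [inv_le_comm₀ (by positivity) (by norm_num)]; linarith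
    _ ≤ (2 + 1 / 2) / (2 - 1 / 2) := exp_le_two_add_div_two_sub (by norm_num) (by norm_num)
    _ ≤ 2 := by norm_num

lemma sum_powerset_abs_card_sub_pow_le {α : Type*} (s : Finset α) (hs : 2 ≤ #s)
    (hn : #s * log #s ≤ n) :
    ∑ t ∈ s.powerset, |(#s : ℝ) - 2 * #t| ^ n ≤ 4 * #s ^ n := by
  set x : ℝ := ((#s : ℝ) ^ 2)⁻¹
  calc ∑ t ∈ s.powerset, |(#s : ℝ) - 2 * #t| ^ n
      ≤ ∑ t ∈ s.powerset, (#s : ℝ) ^ n * (x ^ #t + x ^ (#s - #t)) :=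
        sum_le_sum fun t ht ↦
          abs_sub_two_mul_pow_le (by omega) hn (card_le_card (mem_powerset.1 ht))
    _ = #s ^ n * ((x + 1) ^ #s + (1 + x) ^ #s) := by
        rw [← mul_sum, sum_add_distrib, ← sum_pow_mul_eq_add_pow, ← sum_pow_mul_eq_add_pow]
        simp only [one_pow, mul_one, one_mul]
    _ ≤ #s ^ n * (2 + 2) := by
        rw [add_comm x]
        gcongr <;> exact one_add_inv_sq_pow_le_two hs
    _ = 4 * #s ^ n := by ring

end Bounds

open Real in
theorem two_pow_card_mul_card_parityClass_le {α : Type*} [Fintype α] [DecidableEq α] {n : ℕ}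
    (hα : 2 ≤ Fintype.card α) (hn : Fintype.card α * log (Fintype.card α) ≤ n) (q : α → Bool) :
    2 ^ Fintype.card α * (#(parityClass n q) : ℝ) ≤ 4 * Fintype.card α ^ n := by
  rw [two_pow_card_mul_card_parityClass]
  calc _ ≤ ∑ S ∈ univ.powerset, |(Fintype.card α : ℝ) - 2 * #S| ^ n :=
        sum_le_sum fun S _ ↦ (le_abs_self _).trans_eq (by simp [abs_mul])
    _ ≤ 4 * Fintype.card α ^ n :=
        sum_powerset_abs_card_sub_pow_le univ (by rwa [card_univ]) (by rwa [card_univ])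

/-- For `k ≥ 2`, `n ≥ k·ln k` and any parity vector `q ∈ {0,1}^k`, the number
of words `w ∈ [k]^n` with `|w|_j ≡ q_j (mod 2)` for every letter `j` is at
most `k^n · 2^{2−k}`. -/
theorem parity_class_count_upper (k n : ℕ) (hk : 2 ≤ k)
    (hn : (k : ℝ) * Real.log (k : ℝ) ≤ (n : ℝ)) (q : Fin k → Bool) :
    (Set.ncard {w : List (Fin k) | w.length = n ∧
        ∀ j : Fin k, w.count j % 2 = (if q j then 1 else 0)} : ℝ) ≤
      (k : ℝ) ^ n * (2 : ℝ) ^ ((2 : ℤ) - (k : ℤ)) := by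
  have h := two_pow_card_mul_card_parityClass_le (by simpa) (by simpa) q
  rw [Fintype.card_fin] at h
  rw [ncard_setOf_length_count_mod_two, zpow_sub₀ two_ne_zero, zpow_natCast, mul_div,
    le_div_iff₀ (by positivity)]
  linarith
end

section
/- Let P_n be the language of all permutations of the alphabet [n], i.e., all words of length n in which each letter of [n] appears exactly once. Every log-product expression B with L(B) ⊆ P_n satisfies |L(B)| ≤ n! · 4^{1−n} · n^{(3 + log₂ n)/4}. -/
open Real Set
open scoped Nat

theorem Nat.four_pow_two_mul_le_mul_centralBinom_sq {e : ℕ} (he : 1 ≤ e) :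
    4 ^ (2 * e) ≤ 4 * e * e.centralBinom ^ 2 := by
  induction e, he using Nat.le_induction with
  | base => decide
  | succ e he ih =>
    have hrec := Nat.succ_mul_centralBinom_succ e
    refine Nat.le_of_mul_le_mul_left ?_ (Nat.succ_pos e)
    calc (e + 1) * 4 ^ (2 * (e + 1)) = 16 * (e + 1) * 4 ^ (2 * e) := by ring
      _ ≤ 16 * (e + 1) * (4 * e * e.centralBinom ^ 2) := by gcongr
      _ ≤ 16 * (2 * e + 1) ^ 2 * e.centralBinom ^ 2 := by
          rw [show 16 * (e + 1) * (4 * e * e.centralBinom ^ 2)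
            = 16 * (4 * e * (e + 1)) * e.centralBinom ^ 2 by ring]
          gcongr
          nlinarith
      _ = (e + 1) * (4 * (e + 1) * (e + 1).centralBinom ^ 2) := by
          rw [show (e + 1) * (4 * (e + 1) * (e + 1).centralBinom ^ 2)
            = 4 * ((e + 1) * (e + 1).centralBinom) ^ 2 by ring, hrec]
          ring

noncomputable def logWeight (x : ℝ) : ℝ := log x * (3 + logb 2 x) / 4

lemma logWeight_two_mul {x : ℝ} (hx : 0 < x) :
    logWeight (2 * x) = logWeight x + log 2 + log x / 2 := by
  have h2 : log 2 ≠ 0 := (log_pos one_lt_two).ne'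
  simp only [logWeight, logb, log_mul two_ne_zero hx.ne']
  field_simp
  ring

lemma hasDerivAt_logWeight {x : ℝ} (hx : 0 < x) :
    HasDerivAt logWeight ((3 + 2 * logb 2 x) / (4 * x)) x := by
  have hlog := hasDerivAt_log hx.ne'
  refine ((hlog.fun_mul ((hlog.div_const (log 2)).const_add 3)).div_const 4).congr_deriv ?_
  simp only [logb]
  field_simp
  ring

noncomputable def logStep (x : ℝ) : ℝ := log (x + 1) + logWeight (x + 1) - logWeight x

lemma hasDerivAt_logStep {x : ℝ} (hx : 0 < x) :
    HasDerivAt logStep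
      (1 / (x + 1) + (3 + 2 * logb 2 (x + 1)) / (4 * (x + 1)) - (3 + 2 * logb 2 x) / (4 * x))
      x := by
  have hx1 : 0 < x + 1 := by linarith
  have hshift : HasDerivAt (fun y : ℝ => y + 1) 1 x := (hasDerivAt_id x).add_const 1
  refine (((hshift.log hx1.ne').fun_add ((hasDerivAt_logWeight hx1).comp x hshift)).fun_sub
    (hasDerivAt_logWeight hx)).congr_deriv ?_
  simp

lemma monotoneOn_logStep : MonotoneOn logStep (Ici 1) := by
  refine monotoneOn_of_hasDerivWithinAt_nonneg (convex_Ici 1)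
    (fun x hx => (hasDerivAt_logStep (by simp at hx; linarith)).continuousAt.continuousWithinAt)
    (fun x hx => (hasDerivAt_logStep (by simp at hx; linarith)).hasDerivWithinAt) ?_
  intro x hx
  simp only [interior_Ici, mem_Ioi] at hx
  have hx0 : 0 < x := by linarith
  have hl2 : 1 / 2 < log 2 := by linarith [log_two_gt_d9]
  have hlogb : logb 2 x ≤ logb 2 (x + 1) := logb_le_logb_of_le one_lt_two hx0 (by linarith)
  -- `logb 2 x ≤ (x - 1) / log 2 ≤ 2 (x - 1)` since `log 2 > 1 / 2`
  have hlin : logb 2 x ≤ 2 * (x - 1) := by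
    rw [logb, div_le_iff₀ (by linarith)]
    nlinarith [log_le_sub_one_of_pos hx0]
  have key : 0 ≤ 4 * x - 3 + 2 * x * logb 2 (x + 1) - 2 * (x + 1) * logb 2 x := by nlinarith
  have : 1 / (x + 1) + (3 + 2 * logb 2 (x + 1)) / (4 * (x + 1)) - (3 + 2 * logb 2 x) / (4 * x)
      = (4 * x - 3 + 2 * x * logb 2 (x + 1) - 2 * (x + 1) * logb 2 x) / (4 * x * (x + 1)) := by
    field_simp
    ring
  rw [this]
  positivity

noncomputable def permBound (d : ℕ) : ℝ :=
  (Nat.factorial d : ℝ) * (4 : ℝ) ^ ((1 : ℤ) - (d : ℤ)) *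
    (d : ℝ) ^ ((3 + Real.logb 2 (d : ℝ)) / 4)

lemma permBound_nonneg (d : ℕ) : 0 ≤ permBound d := by
  unfold permBound
  positivity

lemma permBound_one : permBound 1 = 1 := by
  norm_num [permBound]

noncomputable def logPermBound (d : ℕ) : ℝ := log d ! + (1 - d) * log 4 + logWeight d

lemma permBound_eq_exp_logPermBound {d : ℕ} (hd : 1 ≤ d) :
    permBound d = exp (logPermBound d) := by
  have hd0 : (0 : ℝ) < d := by exact_mod_cast hd
  rw [permBound, logPermBound, exp_add, exp_add, exp_log (by positivity), ← rpow_intCast,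
    rpow_def_of_pos four_pos, rpow_def_of_pos hd0, logWeight, mul_div_assoc]
  push_cast
  ring_nf

lemma logPermBound_succ (k : ℕ) :
    logPermBound (k + 1) = logPermBound k + logStep k - log 4 := by
  simp only [logPermBound, logStep, Nat.factorial_succ]
  push_cast
  rw [log_mul (by positivity) (by positivity)]
  ring

lemma logPermBound_add_self {e : ℕ} (he : 1 ≤ e) :
    logPermBound e + log e ! ≤ logPermBound (e + e) := by
  have he0 : (0 : ℝ) < e := by exact_mod_cast he
  have hbinom : (0 : ℝ) < e.centralBinom := by exact_mod_cast e.centralBinom_pos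
  have hfact : ((e + e)! : ℝ) = e.centralBinom * e ! * e ! := by
    rw [Nat.centralBinom_eq_two_mul_choose, two_mul]
    exact_mod_cast (Nat.add_choose_mul_factorial_mul_factorial e e).symm
  have hcentral : 2 * e * log 4 ≤ log 4 + log e + 2 * log e.centralBinom := by
    have h : ((4 ^ (2 * e) : ℕ) : ℝ) ≤ (4 * e * e.centralBinom ^ 2 : ℕ) := by
      exact_mod_cast Nat.four_pow_two_mul_le_mul_centralBinom_sq he
    push_cast at h
    have := log_le_log (by positivity) h
    rw [log_pow, log_mul (by positivity) (by positivity), log_mul (by positivity) (by positivity),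
      log_pow] at this
    push_cast at this
    exact this
  have hlog4 : log 4 = 2 * log 2 := by
    rw [show (4 : ℝ) = 2 ^ 2 by norm_num, log_pow]; push_cast; ring
  simp only [logPermBound]
  rw [hfact, log_mul (by positivity) (by positivity), log_mul hbinom.ne' (by positivity)]
  push_cast
  rw [← two_mul, logWeight_two_mul he0]
  linarith

lemma logPermBound_add_log_factorial_le {e m : ℕ} (he : 1 ≤ e) (hem : e ≤ m) :
    logPermBound m + log e ! ≤ logPermBound (m + e) := by
  induction m, hem using Nat.le_induction with
  | base => exact logPermBound_add_self he
  | succ m hem ih =>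
    have hstep : logStep m ≤ logStep (m + e) :=
      monotoneOn_logStep (mem_Ici.2 (by exact_mod_cast he.trans hem))
        (mem_Ici.2 (by norm_cast; omega)) (by simp)
    rw [add_right_comm, logPermBound_succ, logPermBound_succ]
    push_cast at hstep ⊢
    linarith

lemma permBound_mul_factorial_le {e m : ℕ} (hem : e ≤ m) :
    permBound m * e ! ≤ permBound (m + e) := by
  rcases Nat.eq_zero_or_pos e with rfl | he
  · simp
  rw [permBound_eq_exp_logPermBound (he.trans_le hem), permBound_eq_exp_logPermBound (by omega),
    ← exp_log (show (0 : ℝ) < (e ! : ℝ) by positivity), ← exp_add]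
  exact exp_le_exp.2 (logPermBound_add_log_factorial_le he hem)

lemma Set.ncard_image2_le {α β γ : Type*} {f : α → β → γ} {s : Set α} {t : Set β}
    (hs : s.Finite) (ht : t.Finite) : (image2 f s t).ncard ≤ s.ncard * t.ncard := by
  rw [← image_uncurry_prod, ← ncard_prod]
  exact ncard_image_le (hs.prod ht)

namespace List
variable {α : Type*}

lemma finite_setOf_perm (w : List α) : {u | u ~ w}.Finite :=
  w.permutations.finite_toSet.subset fun _ hu => mem_permutations.2 hu

lemma ncard_setOf_perm_le (w : List α) : {u | u ~ w}.ncard ≤ w.length ! := by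
  classical
  calc {u | u ~ w}.ncard ≤ (w.permutations.toFinset : Set (List α)).ncard :=
        ncard_le_ncard (fun _ hu => by simpa using hu) (Finset.finite_toSet _)
    _ ≤ w.length ! := by
        rw [ncard_coe_finset, ← length_permutations]
        exact toFinset_card_le _

end List

namespace Language

open List
variable {α : Type*}

lemma ncard_mul_le {L₁ L₂ : Language α} (h₁ : (L₁ : Set (List α)).Finite)
    (h₂ : (L₂ : Set (List α)).Finite) :
    (L₁ * L₂ : Set (List α)).ncard ≤ (L₁ : Set (List α)).ncard * (L₂ : Set (List α)).ncard :=
  Set.ncard_image2_le h₁ h₂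

lemma forall_perm_of_mul {L₁ L₂ : Language α} {w w₁ w₂ : List α}
    (hw : ∀ u ∈ L₁ * L₂, u ~ w) (hw₁ : w₁ ∈ L₁) (hw₂ : w₂ ∈ L₂) :
    (∀ u ∈ L₁, u ~ w₁) ∧ (∀ u ∈ L₂, u ~ w₂) := by
  have h₁₂ := hw _ (mem_mul.2 ⟨w₁, hw₁, w₂, hw₂, rfl⟩)
  refine ⟨fun u hu => ?_, fun u hu => ?_⟩
  · exact (perm_append_right_iff w₂).1 ((hw _ (mem_mul.2 ⟨u, hu, w₂, hw₂, rfl⟩)).trans h₁₂.symm)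
  · exact (perm_append_left_iff w₁).1 ((hw _ (mem_mul.2 ⟨w₁, hw₁, u, hu, rfl⟩)).trans h₁₂.symm)

lemma finite_of_forall_perm {L : Language α} {w : List α} (h : ∀ u ∈ L, u ~ w) :
    (L : Set (List α)).Finite :=
  (finite_setOf_perm w).subset h

lemma ncard_le_factorial_of_forall_perm {L : Language α} {w : List α} (h : ∀ u ∈ L, u ~ w) :
    (L : Set (List α)).ncard ≤ w.length ! :=
  (ncard_le_ncard h (finite_setOf_perm w)).trans (ncard_setOf_perm_le w)

lemma ncard_mul_le_of_forall_perm {L₁ L₂ : Language α} {w : List α} {b : ℕ → ℝ}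
    (hb : ∀ d, 0 ≤ b d) (hw : ∀ u ∈ L₁ * L₂, u ~ w)
    (hbound : ∀ w₁ ∈ L₁, ∀ w₂ ∈ L₂, (∀ u ∈ L₁, u ~ w₁) → (∀ u ∈ L₂, u ~ w₂) →
      ((L₁ : Set (List α)).ncard : ℝ) * (L₂ : Set (List α)).ncard ≤ b (w₁.length + w₂.length)) :
    ((L₁ * L₂ : Set (List α)).ncard : ℝ) ≤ b w.length := by
  rcases (L₁ * L₂ : Set (List α)).eq_empty_or_nonempty with hempty | ⟨_, w₁, hw₁, w₂, hw₂, rfl⟩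
  · simp [hempty, hb]
  obtain ⟨h₁, h₂⟩ := forall_perm_of_mul hw hw₁ hw₂
  calc ((L₁ * L₂ : Set (List α)).ncard : ℝ)
      ≤ (L₁ : Set (List α)).ncard * (L₂ : Set (List α)).ncard := by
        exact_mod_cast ncard_mul_le (finite_of_forall_perm h₁) (finite_of_forall_perm h₂)
    _ ≤ b (w₁.length + w₂.length) := hbound w₁ hw₁ w₂ hw₂ h₁ h₂
    _ = b w.length := by
        rw [← length_append, (hw _ (mem_mul.2 ⟨w₁, hw₁, w₂, hw₂, rfl⟩)).length_eq]

lemma ncard_mul_ncard_le_permBound {L₁ L₂ : Language α} {w₁ w₂ : List α}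
    (h₁ : ((L₁ : Set (List α)).ncard : ℝ) ≤ permBound w₁.length) (h₂ : ∀ u ∈ L₂, u ~ w₂)
    (hlen : w₂.length ≤ w₁.length) :
    ((L₁ : Set (List α)).ncard : ℝ) * (L₂ : Set (List α)).ncard ≤
      permBound (w₁.length + w₂.length) :=
  calc ((L₁ : Set (List α)).ncard : ℝ) * (L₂ : Set (List α)).ncard
      ≤ permBound w₁.length * w₂.length ! :=
        mul_le_mul h₁ (by exact_mod_cast ncard_le_factorial_of_forall_perm h₂) (by positivity)
          (permBound_nonneg _)
    _ ≤ permBound (w₁.length + w₂.length) := permBound_mul_factorial_le hlen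

end Language

open List in
theorem RE.LogProd.ncard_lang_le_permBound {α : Type} {B : RE α} (hB : B.LogProd) {w : List α}
    (hw : ∀ u ∈ B.lang, u ~ w) : ((B.lang : Set (List α)).ncard : ℝ) ≤ permBound w.length := by
  induction hB generalizing w with
  | char a =>
    have hlen : w.length = 1 := (hw [a] rfl).length_eq.symm
    rw [hlen, permBound_one]
    exact_mod_cast (ncard_singleton [a]).le
  | catL _ hd₁ hd₂ hd ih =>
    refine Language.ncard_mul_le_of_forall_perm permBound_nonneg hw
      fun w₁ hw₁ w₂ hw₂ h₁ h₂ => ?_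
    exact Language.ncard_mul_ncard_le_permBound (ih h₁) h₂
      (by rw [hd₁ w₁ hw₁, hd₂ w₂ hw₂]; exact hd)
  | catR _ hd₁ hd₂ hd ih =>
    refine Language.ncard_mul_le_of_forall_perm permBound_nonneg hw
      fun w₂ hw₂ w₁ hw₁ h₂ h₁ => ?_
    rw [mul_comm, add_comm]
    exact Language.ncard_mul_ncard_le_permBound (ih h₁) h₂
      (by rw [hd₁ w₁ hw₁, hd₂ w₂ hw₂]; exact hd)

theorem logProd_perm_count_general (n : ℕ) (B : RE (Fin n))
    (hB : RE.LogProd B)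
    (hsub : ∀ w ∈ B.lang, ∀ a : Fin n, w.count a = 1) :
    (Set.ncard (show Set (List (Fin n)) from B.lang) : ℝ) ≤
      (Nat.factorial n : ℝ) * (4 : ℝ) ^ ((1 : ℤ) - (n : ℤ)) *
        (n : ℝ) ^ ((3 + Real.logb 2 (n : ℝ)) / 4) := by
  have hperm : ∀ w ∈ B.lang, w.Perm (List.finRange n) := fun w hw =>
    List.perm_iff_count.2 fun a => by
      rw [hsub w hw a, List.count_eq_one_of_mem (List.nodup_finRange n) (List.mem_finRange a)]
  simpa only [List.length_finRange, permBound] using hB.ncard_lang_le_permBound hperm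

/-- Every log-product expression `B` describing only permutations of `[n]`
(words in which each letter of `[n]` appears exactly once) satisfies
`|L(B)| ≤ n! · 4^{1−n} · n^{(3 + log₂ n)/4}`. -/
theorem logProd_perm_count (n : ℕ) (hn : 1 ≤ n) (B : RE (Fin n))
    (hB : RE.LogProd B)
    (hsub : ∀ w ∈ B.lang, ∀ a : Fin n, w.count a = 1) :
    (Set.ncard (show Set (List (Fin n)) from B.lang) : ℝ) ≤
      (Nat.factorial n : ℝ) * (4 : ℝ) ^ ((1 : ℤ) - (n : ℤ)) *
        (n : ℝ) ^ ((3 + Real.logb 2 (n : ℝ)) / 4) :=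
  logProd_perm_count_general n B hB hsub
end

section
/- For every finite language L over an alphabet Σ and every weighting μ: Σ → ℝ≥0 (extended to words by μ(w) = Σ_i μ(w_i)), the minimal regular expression length of L is at least the minimal regular expression length of the higher μ-envelope of L, i.e., the sublanguage of all words of L of maximal μ-weight. Similarly, for every regular language L', the minimal regular expression length of L' is at least that of its lower μ-envelope (words of minimal μ-weight). -/
/-- Reverse polish length of a regular expression (number of syntax tree nodes). -/
def reSize {α : Type} : RegularExpression α → ℕ
  | .zero => 1
  | .epsilon => 1
  | .char _ => 1
  | .plus r s => reSize r + reSize s + 1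
  | .comp r s => reSize r + reSize s + 1
  | .star r => reSize r + 1

/-- The `μ`-weight of a word. -/
def wt {α : Type} (μ : α → ℝ) (w : List α) : ℝ := (w.map μ).sum

/-!
Envelopes commute with the regular operations. Weights are additive, so the minimal words of
`L₁ L₂` are the products of minimal words of `L₁` and of `L₂`; the minimal words of `L₁ + L₂` are
those of the summand with the smaller minimum, or of both when the minima agree. For nonnegative
weights the minimal words of `L∗` are the stars of the zero-weight words of `L`: these form the
envelope of `L` if `L` has any, and otherwise only `ε` remains. Replacing every subexpression by an
expression for its envelope therefore never increases the size. The higher envelope is the lower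
envelope for the weight `-μ`; there the star needs no nonnegativity, because a finite `L∗` is `{ε}`.
-/

open scoped Computability

namespace Language

variable {α : Type*} {f : List α → ℝ} {L L₁ L₂ : Language α} {u v w x y : List α}

def minEnvelope (f : List α → ℝ) (L : Language α) : Language α :=
  {w | w ∈ L ∧ ∀ v ∈ L, f w ≤ f v}

theorem mem_minEnvelope : w ∈ minEnvelope f L ↔ w ∈ L ∧ ∀ v ∈ L, f w ≤ f v :=
  Iff.rfl

theorem eq_zero_of_forall_notMem (h : ∀ w, w ∉ L) : L = 0 :=
  ext fun w => iff_of_false (h w) (notMem_zero w)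

theorem minEnvelope_eq_self_of_subsingleton (h : ∀ u ∈ L, ∀ v ∈ L, u = v) :
    minEnvelope f L = L :=
  ext fun w => ⟨And.left, fun hw => ⟨hw, fun v hv => h w hw v hv ▸ le_rfl⟩⟩

theorem mem_minEnvelope_add :
    w ∈ minEnvelope f (L₁ + L₂) ↔
      (w ∈ minEnvelope f L₁ ∧ ∀ v ∈ L₂, f w ≤ f v) ∨
        (w ∈ minEnvelope f L₂ ∧ ∀ v ∈ L₁, f w ≤ f v) := by
  simp only [mem_minEnvelope, mem_add]
  grind

theorem minEnvelope_add_of_lt (hx : x ∈ minEnvelope f L₁) (hy : y ∈ minEnvelope f L₂)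
    (h : f x < f y) : minEnvelope f (L₁ + L₂) = minEnvelope f L₁ := by
  ext w
  rw [mem_minEnvelope_add]
  constructor
  · rintro (⟨hw, -⟩ | ⟨hw, hwx⟩)
    · exact hw
    · exact absurd (hwx x hx.1) (h.trans_le (hy.2 w hw.1)).not_ge
  · exact fun hw => Or.inl ⟨hw, fun v hv => (hw.2 x hx.1).trans (h.le.trans (hy.2 v hv))⟩

theorem minEnvelope_add_of_eq (hx : x ∈ minEnvelope f L₁) (hy : y ∈ minEnvelope f L₂)
    (h : f x = f y) : minEnvelope f (L₁ + L₂) = minEnvelope f L₁ + minEnvelope f L₂ := by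
  ext w
  rw [mem_minEnvelope_add, mem_add]
  constructor
  · rintro (⟨hw, -⟩ | ⟨hw, -⟩)
    · exact Or.inl hw
    · exact Or.inr hw
  · rintro (hw | hw)
    · exact Or.inl ⟨hw, fun v hv => (hw.2 x hx.1).trans (h.trans_le (hy.2 v hv))⟩
    · exact Or.inr ⟨hw, fun v hv => (hw.2 y hy.1).trans (h.symm.trans_le (hx.2 v hv))⟩

theorem minEnvelope_mul (hf : ∀ u v, f (u ++ v) = f u + f v) :
    minEnvelope f (L₁ * L₂) = minEnvelope f L₁ * minEnvelope f L₂ := by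
  ext w
  simp only [mem_minEnvelope, mem_mul]
  constructor
  · rintro ⟨⟨u, hu, v, hv, rfl⟩, hmin⟩
    refine ⟨u, ⟨hu, fun u' hu' => ?_⟩, v, ⟨hv, fun v' hv' => ?_⟩, rfl⟩
    · have := hmin (u' ++ v) ⟨u', hu', v, hv, rfl⟩
      rw [hf, hf] at this
      linarith
    · have := hmin (u ++ v') ⟨u, hu, v', hv', rfl⟩
      rw [hf, hf] at this
      linarith
  · rintro ⟨u, ⟨hu, humin⟩, v, ⟨hv, hvmin⟩, rfl⟩
    refine ⟨⟨u, hu, v, hv, rfl⟩, ?_⟩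
    rintro _ ⟨u', hu', v', hv', rfl⟩
    rw [hf, hf]
    exact add_le_add (humin u' hu') (hvmin v' hv')

theorem finite_left_of_finite_mul (h : {w | w ∈ L₁ * L₂}.Finite) (hv : v ∈ L₂) :
    {w | w ∈ L₁}.Finite :=
  (h.preimage (List.append_left_injective v).injOn).subset fun _ hu => append_mem_mul hu hv

theorem finite_right_of_finite_mul (h : {w | w ∈ L₁ * L₂}.Finite) (hu : u ∈ L₁) :
    {w | w ∈ L₂}.Finite :=
  (h.preimage (List.append_right_injective u).injOn).subset fun _ hv => append_mem_mul hu hv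

theorem kstar_eq_one_of_finite (h : {w | w ∈ L∗}.Finite) : L∗ = 1 := by
  have hL : ∀ u ∈ L, u = [] := by
    intro u hu
    by_contra hne
    have hlen (n : ℕ) : (List.replicate n u).flatten.length = n * u.length := by simp
    refine Set.infinite_of_injective_forall_mem (f := fun n => (List.replicate n u).flatten)
      (fun m n hmn => ?_) (fun n => join_mem_kstar fun y hy => List.eq_of_mem_replicate hy ▸ hu) h
    have := congrArg List.length hmn
    rw [hlen, hlen] at this
    exact Nat.eq_of_mul_eq_mul_right (List.length_pos_iff.mpr hne) this
  ext w
  rw [mem_kstar, mem_one]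
  constructor
  · rintro ⟨S, rfl, hS⟩
    exact List.flatten_eq_nil_iff.2 fun y hy => hL y (hS y hy)
  · rintro rfl
    exact ⟨[], rfl, by simp⟩

end Language

section Weight

open Language

variable {α : Type} {μ : α → ℝ} {L : Language α} {u w : List α}

theorem wt_append (μ : α → ℝ) (u v : List α) : wt μ (u ++ v) = wt μ u + wt μ v := by
  simp [wt]

theorem wt_nonneg (hμ : ∀ a, 0 ≤ μ a) (w : List α) : 0 ≤ wt μ w :=
  List.sum_nonneg fun _ hx => by
    obtain ⟨a, -, rfl⟩ := List.mem_map.mp hx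
    exact hμ a

theorem wt_flatten_eq_zero_iff (hμ : ∀ a, 0 ≤ μ a) :
    ∀ S : List (List α), wt μ S.flatten = 0 ↔ ∀ y ∈ S, wt μ y = 0
  | [] => by simp [wt]
  | y :: S => by
    rw [List.flatten_cons, wt_append, add_eq_zero_iff_of_nonneg (wt_nonneg hμ y) (wt_nonneg hμ _),
      wt_flatten_eq_zero_iff hμ S, List.forall_mem_cons]

theorem mem_minEnvelope_wt_iff (hμ : ∀ a, 0 ≤ μ a) (hu : u ∈ L) (hu0 : wt μ u = 0) :
    w ∈ minEnvelope (wt μ) L ↔ w ∈ L ∧ wt μ w = 0 := by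
  refine and_congr_right fun _ => ⟨fun hmin => ?_, fun hw0 v _ => hw0 ▸ wt_nonneg hμ v⟩
  exact le_antisymm (hu0 ▸ hmin u hu) (wt_nonneg hμ w)

theorem mem_minEnvelope_wt_kstar (hμ : ∀ a, 0 ≤ μ a) :
    w ∈ minEnvelope (wt μ) L∗ ↔ ∃ S : List (List α), w = S.flatten ∧ ∀ y ∈ S, y ∈ L ∧ wt μ y = 0 := by
  rw [mem_minEnvelope_wt_iff hμ (nil_mem_kstar L) rfl, mem_kstar]
  constructor
  · rintro ⟨⟨S, rfl, hS⟩, hw0⟩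
    exact ⟨S, rfl, fun y hy => ⟨hS y hy, (wt_flatten_eq_zero_iff hμ S).1 hw0 y hy⟩⟩
  · rintro ⟨S, rfl, hS⟩
    exact ⟨⟨S, rfl, fun y hy => (hS y hy).1⟩, (wt_flatten_eq_zero_iff hμ S).2 fun y hy => (hS y hy).2⟩

theorem minEnvelope_wt_kstar_of_mem (hμ : ∀ a, 0 ≤ μ a) (hu : u ∈ L) (hu0 : wt μ u = 0) :
    minEnvelope (wt μ) L∗ = (minEnvelope (wt μ) L)∗ := by
  ext w
  simp only [mem_minEnvelope_wt_kstar hμ, mem_kstar, mem_minEnvelope_wt_iff hμ hu hu0]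

theorem minEnvelope_wt_kstar_of_forall_ne (hμ : ∀ a, 0 ≤ μ a) (h : ∀ u ∈ L, wt μ u ≠ 0) :
    minEnvelope (wt μ) L∗ = 1 := by
  ext w
  rw [mem_minEnvelope_wt_kstar hμ, mem_one]
  constructor
  · rintro ⟨S, rfl, hS⟩
    rw [List.eq_nil_iff_forall_not_mem.2 fun y hy => h y (hS y hy).1 (hS y hy).2, List.flatten_nil]
  · rintro rfl
    exact ⟨[], rfl, by simp⟩

end Weight

namespace RegularExpression

open Language

variable {α : Type} {f : List α → ℝ} {r s r' s' t : RegularExpression α}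

/-- The nonemptiness clause is what lets the envelope of a sum be read off from those of its
summands. -/
def IsMinEnvelope (f : List α → ℝ) (r r' : RegularExpression α) : Prop :=
  r'.matches' = minEnvelope f r.matches' ∧ ((∃ u, u ∈ r.matches') → ∃ x, x ∈ r'.matches')

theorem isMinEnvelope_congr (h : r.matches' = s.matches') :
    IsMinEnvelope f r t ↔ IsMinEnvelope f s t := by
  rw [IsMinEnvelope, IsMinEnvelope, h]

theorem isMinEnvelope_self (h : ∀ u ∈ r.matches', ∀ v ∈ r.matches', u = v) :
    IsMinEnvelope f r r :=
  ⟨(minEnvelope_eq_self_of_subsingleton h).symm, id⟩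

theorem isMinEnvelope_zero : IsMinEnvelope f zero zero :=
  isMinEnvelope_self fun u hu => absurd hu (notMem_zero u)

theorem isMinEnvelope_epsilon : IsMinEnvelope f epsilon epsilon :=
  isMinEnvelope_self fun _ hu _ hv => (hu : _ = []).trans (hv : _ = []).symm

theorem isMinEnvelope_char (a : α) : IsMinEnvelope f (char a) (char a) :=
  isMinEnvelope_self fun _ hu _ hv => (hu : _ = [a]).trans (hv : _ = [a]).symm

theorem isMinEnvelope_zero_of_forall_notMem (h : ∀ w, w ∉ r.matches') :
    IsMinEnvelope f r zero :=
  (isMinEnvelope_congr (eq_zero_of_forall_notMem h)).2 isMinEnvelope_zero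

theorem IsMinEnvelope.exists_plus (hr : IsMinEnvelope f r r') (hs : IsMinEnvelope f s s') :
    ∃ t, IsMinEnvelope f (r.plus s) t ∧ reSize t ≤ reSize r' + reSize s' + 1 := by
  have hmatches : (r.plus s).matches' = r.matches' + s.matches' := rfl
  by_cases hr0 : ∃ u, u ∈ r.matches'
  swap
  · refine ⟨s', (isMinEnvelope_congr ?_).2 hs, by omega⟩
    rw [hmatches, eq_zero_of_forall_notMem (not_exists.1 hr0), zero_add]
  by_cases hs0 : ∃ v, v ∈ s.matches'
  swap
  · refine ⟨r', (isMinEnvelope_congr ?_).2 hr, by omega⟩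
    rw [hmatches, eq_zero_of_forall_notMem (not_exists.1 hs0), add_zero]
  obtain ⟨x, hx⟩ := hr.2 hr0
  obtain ⟨y, hy⟩ := hs.2 hs0
  have hx' := hr.1 ▸ hx
  have hy' := hs.1 ▸ hy
  rcases lt_trichotomy (f x) (f y) with h | h | h
  · refine ⟨r', ⟨?_, fun _ => ⟨x, hx⟩⟩, by omega⟩
    rw [hmatches, minEnvelope_add_of_lt hx' hy' h, hr.1]
  · refine ⟨r'.plus s', ⟨?_, fun _ => ⟨x, Or.inl hx⟩⟩, le_rfl⟩
    rw [hmatches, minEnvelope_add_of_eq hx' hy' h, ← hr.1, ← hs.1]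
    rfl
  · refine ⟨s', ⟨?_, fun _ => ⟨y, hy⟩⟩, by omega⟩
    rw [hmatches, add_comm, minEnvelope_add_of_lt hy' hx' h, hs.1]

theorem IsMinEnvelope.comp (hf : ∀ u v, f (u ++ v) = f u + f v) (hr : IsMinEnvelope f r r')
    (hs : IsMinEnvelope f s s') : IsMinEnvelope f (r.comp s) (r'.comp s') := by
  refine ⟨?_, ?_⟩
  · change r'.matches' * s'.matches' = minEnvelope f (r.matches' * s.matches')
    rw [hr.1, hs.1, minEnvelope_mul hf]
  · rintro ⟨_, u, hu, v, hv, -⟩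
    obtain ⟨x, hx⟩ := hr.2 ⟨u, hu⟩
    obtain ⟨y, hy⟩ := hs.2 ⟨v, hv⟩
    exact ⟨x ++ y, append_mem_mul hx hy⟩

theorem isMinEnvelope_star_of_finite (h : {w | w ∈ r.star.matches'}.Finite) :
    IsMinEnvelope f r.star epsilon :=
  (isMinEnvelope_congr (r := r.star) (s := epsilon) (kstar_eq_one_of_finite h)).2 isMinEnvelope_epsilon

theorem IsMinEnvelope.exists_star_wt {μ : α → ℝ} (hμ : ∀ a, 0 ≤ μ a)
    (hr : IsMinEnvelope (wt μ) r r') :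
    ∃ t, IsMinEnvelope (wt μ) r.star t ∧ reSize t ≤ reSize r' + 1 := by
  by_cases h0 : ∃ u ∈ r.matches', wt μ u = 0
  · obtain ⟨u, hu, hu0⟩ := h0
    refine ⟨r'.star, ⟨?_, fun _ => ⟨[], nil_mem_kstar _⟩⟩, le_rfl⟩
    change r'.matches'∗ = minEnvelope (wt μ) r.matches'∗
    rw [hr.1, minEnvelope_wt_kstar_of_mem hμ hu hu0]
  · push Not at h0
    refine ⟨epsilon, ⟨(minEnvelope_wt_kstar_of_forall_ne hμ h0).symm, fun _ => ⟨[], rfl⟩⟩, ?_⟩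
    simp only [reSize]
    omega

theorem exists_isMinEnvelope_of_finite (hf : ∀ u v, f (u ++ v) = f u + f v)
    (r : RegularExpression α) (hfin : {w | w ∈ r.matches'}.Finite) :
    ∃ r', IsMinEnvelope f r r' ∧ reSize r' ≤ reSize r := by
  induction r with
  | zero => exact ⟨zero, isMinEnvelope_zero, le_rfl⟩
  | epsilon => exact ⟨epsilon, isMinEnvelope_epsilon, le_rfl⟩
  | char a => exact ⟨char a, isMinEnvelope_char a, le_rfl⟩
  | plus r s ihr ihs =>
    obtain ⟨r', hr, hr'⟩ := ihr (hfin.subset fun _ hw => Or.inl hw)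
    obtain ⟨s', hs, hs'⟩ := ihs (hfin.subset fun _ hw => Or.inr hw)
    obtain ⟨t, ht, ht'⟩ := hr.exists_plus hs
    exact ⟨t, ht, by simp only [reSize]; omega⟩
  | comp r s ihr ihs =>
    by_cases hne : (∃ u, u ∈ r.matches') ∧ ∃ v, v ∈ s.matches'
    · obtain ⟨⟨u, hu⟩, v, hv⟩ := hne
      obtain ⟨r', hr, hr'⟩ := ihr (finite_left_of_finite_mul hfin hv)
      obtain ⟨s', hs, hs'⟩ := ihs (finite_right_of_finite_mul hfin hu)
      exact ⟨_, hr.comp hf hs, by simp only [reSize]; omega⟩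
    · refine ⟨zero, isMinEnvelope_zero_of_forall_notMem ?_, by simp only [reSize]; omega⟩
      rintro _ ⟨u, hu, v, hv, -⟩
      exact hne ⟨⟨u, hu⟩, v, hv⟩
  | star r _ => exact ⟨epsilon, isMinEnvelope_star_of_finite hfin, by simp only [reSize]; omega⟩

theorem exists_isMinEnvelope_wt {μ : α → ℝ} (hμ : ∀ a, 0 ≤ μ a) (r : RegularExpression α) :
    ∃ r', IsMinEnvelope (wt μ) r r' ∧ reSize r' ≤ reSize r := by
  induction r with
  | zero => exact ⟨zero, isMinEnvelope_zero, le_rfl⟩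
  | epsilon => exact ⟨epsilon, isMinEnvelope_epsilon, le_rfl⟩
  | char a => exact ⟨char a, isMinEnvelope_char a, le_rfl⟩
  | plus r s ihr ihs =>
    obtain ⟨r', hr, hr'⟩ := ihr
    obtain ⟨s', hs, hs'⟩ := ihs
    obtain ⟨t, ht, ht'⟩ := hr.exists_plus hs
    exact ⟨t, ht, by simp only [reSize]; omega⟩
  | comp r s ihr ihs =>
    obtain ⟨r', hr, hr'⟩ := ihr
    obtain ⟨s', hs, hs'⟩ := ihs
    exact ⟨_, hr.comp (wt_append μ) hs, by simp only [reSize]; omega⟩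
  | star r ihr =>
    obtain ⟨r', hr, hr'⟩ := ihr
    obtain ⟨t, ht, ht'⟩ := hr.exists_star_wt hμ
    exact ⟨t, ht, by simp only [reSize]; omega⟩

end RegularExpression

/-- Envelopes: for every weighting `μ : Σ → ℝ≥0`, the minimal regular
expression length of a finite language `L` is at least that of its higher
`μ`-envelope (the words of `L` of maximal `μ`-weight), and the minimal regular
expression length of any regular language `L'` is at least that of its lower
`μ`-envelope (the words of minimal `μ`-weight).  Both claims are expressed by
producing, from any expression for the language, an expression for the
envelope of no greater length. -/
theorem envelope_bound {α : Type} (μ : α → ℝ) (hμ : ∀ a, 0 ≤ μ a) :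
    (∀ r : RegularExpression α,
      {w | w ∈ r.matches'}.Finite →
      ∃ r' : RegularExpression α,
        (∀ w, w ∈ r'.matches' ↔
          (w ∈ r.matches' ∧ ∀ v ∈ r.matches', wt μ v ≤ wt μ w)) ∧
        reSize r' ≤ reSize r) ∧
    (∀ r : RegularExpression α,
      ∃ r' : RegularExpression α,
        (∀ w, w ∈ r'.matches' ↔
          (w ∈ r.matches' ∧ ∀ v ∈ r.matches', wt μ w ≤ wt μ v)) ∧
        reSize r' ≤ reSize r) := by
  refine ⟨fun r hfin => ?_, fun r => ?_⟩
  · obtain ⟨r', hr, hsize⟩ := RegularExpression.exists_isMinEnvelope_of_finite (f := fun w => -wt μ w)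
      (fun u v => by rw [wt_append, neg_add]) r hfin
    refine ⟨r', fun w => ?_, hsize⟩
    simp only [hr.1, Language.mem_minEnvelope, neg_le_neg_iff]
  · obtain ⟨r', hr, hsize⟩ := RegularExpression.exists_isMinEnvelope_wt hμ r
    exact ⟨r', fun w => by rw [hr.1]; rfl, hsize⟩
end

section
/- For the function f(x) = −n·H(x) − 2nx + (1/4)·[3·log₂(nx) + (log₂(nx))²], where H(x) = −x·log₂ x − (1−x)·log₂(1−x), and for n ≥ 8, the second derivative f''(x) is strictly positive for all x ∈ [1/2, 1); hence f is convex on [1/2, 1). -/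
/-!
Write `H = binEntropy / log 2` and `L x = log₂ (n x)`. Since `binEntropy'' = -1 / (x (1 - x))` and
`L' = 1 / (x log 2)`,
`f'' x = n / (log 2 · x (1 - x)) + (2 / log 2 - 3 - 2 L x) / (4 x² log 2)`.
On `[1/2, 1)` we have `x / (1 - x) ≥ 1` and `L x < n` (as `n x < 2ⁿ`), so
`4 x² log 2 · f'' x > 4 n - 3 - 2 n > 0`; a positive second derivative gives convexity.
-/

open Real Set Filter Topology

theorem deriv_deriv_eq_of_hasDerivAt {𝕜 F : Type*} [NontriviallyNormedField 𝕜]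
    [NormedAddCommGroup F] [NormedSpace 𝕜 F] {f f' : 𝕜 → F} {f'' : F} {s : Set 𝕜} {x : 𝕜}
    (hs : s ∈ 𝓝 x) (hf : ∀ y ∈ s, HasDerivAt f (f' y) y) (hf' : HasDerivAt f' f'' x) :
    deriv (deriv f) x = f'' := by
  have hderiv : deriv f =ᶠ[𝓝 x] f' := eventually_of_mem hs fun y hy => (hf y hy).deriv
  rw [hderiv.deriv_eq, hf'.deriv]

theorem binEntropy_div_log (b p : ℝ) :
    binEntropy p / log b = -(p * logb b p) - (1 - p) * logb b (1 - p) := by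
  simp only [binEntropy, logb, log_inv]
  ring

theorem hasDerivAt_log_one_sub_sub_log {p : ℝ} (hp₀ : p ≠ 0) (hp₁ : p ≠ 1) :
    HasDerivAt (fun p => log (1 - p) - log p) (-1 / (p * (1 - p))) p := by
  have h1p : 1 - p ≠ 0 := sub_ne_zero.mpr hp₁.symm
  refine ((((hasDerivAt_id p).const_sub 1).log h1p).sub (hasDerivAt_log hp₀)).congr_deriv ?_
  simp only [id]
  field_simp
  ring

theorem hasDerivAt_logb_const_mul {b c x : ℝ} (hc : c ≠ 0) (hx : x ≠ 0) :
    HasDerivAt (fun y => logb b (c * y)) (1 / (x * log b)) x := by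
  refine ((((hasDerivAt_id x).const_mul c).log (mul_ne_zero hc hx)).div_const (log b)).congr_deriv ?_
  simp only [id]
  field_simp

/-- The function `f` of the statement, with `H = binEntropy / log 2` (`binEntropy` is in nats). -/
noncomputable def entropyObjective (n x : ℝ) : ℝ :=
  -(n / log 2) * binEntropy x - 2 * n * x + 1 / 4 * (3 * logb 2 (n * x) + logb 2 (n * x) ^ 2)

section

variable {n x : ℝ}

theorem hasDerivAt_logb_quadratic (hn : n ≠ 0) (hx : x ≠ 0) :
    HasDerivAt (fun y => 1 / 4 * (3 * logb 2 (n * y) + logb 2 (n * y) ^ 2))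
      ((3 + 2 * logb 2 (n * x)) / (4 * x * log 2)) x := by
  have hL := hasDerivAt_logb_const_mul (b := 2) hn hx
  refine (((hL.const_mul 3).add (hL.pow 2)).const_mul (1 / 4)).congr_deriv ?_
  field_simp
  ring

theorem hasDerivAt_deriv_logb_quadratic (hn : n ≠ 0) (hx : x ≠ 0) :
    HasDerivAt (fun y => (3 + 2 * logb 2 (n * y)) / (4 * y * log 2))
      ((2 / log 2 - 3 - 2 * logb 2 (n * x)) / (4 * x ^ 2 * log 2)) x := by
  have hL := hasDerivAt_logb_const_mul (b := 2) hn hx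
  refine (((hL.const_mul 2).const_add 3).div (((hasDerivAt_id x).const_mul 4).mul_const (log 2))
    (by positivity)).congr_deriv ?_
  simp only [id]
  field_simp
  ring

theorem hasDerivAt_entropyObjective (hn : n ≠ 0) (hx : x ∈ Ioo 0 1) :
    HasDerivAt (entropyObjective n)
      (-(n / log 2) * (log (1 - x) - log x) - 2 * n + (3 + 2 * logb 2 (n * x)) / (4 * x * log 2))
      x := by
  have hx₀ : x ≠ 0 := hx.1.ne'
  have hx₁ : x ≠ 1 := hx.2.ne
  refine ((((hasDerivAt_binEntropy hx₀ hx₁).const_mul _).sub ((hasDerivAt_id x).const_mul _)).add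
    (hasDerivAt_logb_quadratic hn hx₀)).congr_deriv ?_
  rw [mul_one]

theorem deriv_deriv_entropyObjective (hn : n ≠ 0) (hx : x ∈ Ioo 0 1) :
    deriv (deriv (entropyObjective n)) x =
      n / (log 2 * (x * (1 - x))) + (2 / log 2 - 3 - 2 * logb 2 (n * x)) / (4 * x ^ 2 * log 2) := by
  refine deriv_deriv_eq_of_hasDerivAt (Ioo_mem_nhds hx.1 hx.2)
    (fun y hy => hasDerivAt_entropyObjective hn hy) ?_
  refine ((((hasDerivAt_log_one_sub_sub_log hx.1.ne' hx.2.ne).const_mul _).sub_const _).add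
    (hasDerivAt_deriv_logb_quadratic hn hx.1.ne')).congr_deriv ?_
  field_simp

end

theorem logb_two_natCast_mul_lt {n : ℕ} (hn : 0 < n) {x : ℝ} (hx₀ : 0 < x) (hx₁ : x ≤ 1) :
    logb 2 (n * x) < n := by
  have hpos : (0 : ℝ) < n * x := by positivity
  rw [logb_lt_iff_lt_rpow one_lt_two hpos, rpow_natCast]
  calc (n : ℝ) * x ≤ n := mul_le_of_le_one_right n.cast_nonneg hx₁
    _ < 2 ^ n := by exact_mod_cast n.lt_two_pow_self

theorem deriv_deriv_entropyObjective_pos {n : ℕ} (hn : 2 ≤ n) {x : ℝ} (hx : x ∈ Ico (1 / 2) 1) :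
    0 < n / (log 2 * (x * (1 - x))) + (2 / log 2 - 3 - 2 * logb 2 (n * x)) / (4 * x ^ 2 * log 2) := by
  obtain ⟨hx₀, hx₁⟩ := hx
  have h1x : 0 < 1 - x := by linarith
  have hL := logb_two_natCast_mul_lt (n := n) (by omega) (by linarith) hx₁.le
  have hratio : 1 ≤ x / (1 - x) := by rw [le_div_iff₀ h1x]; linarith
  have hn2 : (2 : ℝ) ≤ n := by exact_mod_cast hn
  have hnum : 0 < 4 * n * (x / (1 - x)) + 2 / log 2 - 3 - 2 * logb 2 (n * x) := by
    have h4n : 4 * n ≤ 4 * n * (x / (1 - x)) := le_mul_of_one_le_right (by positivity) hratio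
    have : 0 < 2 / log 2 := by positivity
    linarith
  calc 0 < (4 * n * (x / (1 - x)) + 2 / log 2 - 3 - 2 * logb 2 (n * x)) / (4 * x ^ 2 * log 2) :=
        div_pos hnum (by positivity)
    _ = _ := by field_simp [h1x.ne']; ring

/-- For `n ≥ 8`, the function
`f(x) = −n·H(x) − 2nx + (1/4)·(3·log₂(nx) + (log₂(nx))²)`, where `H` is the
binary entropy function, has strictly positive second derivative on
`[1/2, 1)`; hence `f` is convex on `[1/2, 1)`. -/
theorem f_second_deriv_pos_and_convex (n : ℕ) (hn : 8 ≤ n)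
    (f : ℝ → ℝ)
    (hf : f = fun x : ℝ =>
      -((n : ℝ) * (-(x * Real.logb 2 x) - (1 - x) * Real.logb 2 (1 - x)))
        - 2 * (n : ℝ) * x
        + (1 / 4) * (3 * Real.logb 2 ((n : ℝ) * x) + (Real.logb 2 ((n : ℝ) * x)) ^ 2)) :
    (∀ x ∈ Set.Ico (1 / 2 : ℝ) 1, 0 < deriv (deriv f) x) ∧
    ConvexOn ℝ (Set.Ico (1 / 2 : ℝ) 1) f := by
  have hf_eq : f = entropyObjective n := by
    subst hf
    funext x
    simp only [entropyObjective, ← binEntropy_div_log]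
    ring
  have hn₀ : (n : ℝ) ≠ 0 := Nat.cast_ne_zero.mpr (by omega)
  have hIco : Ico (1 / 2 : ℝ) 1 ⊆ Ioo 0 1 := fun x hx => ⟨by linarith [hx.1], hx.2⟩
  have hpos : ∀ x ∈ Ico (1 / 2 : ℝ) 1, 0 < deriv (deriv f) x := fun x hx => by
    rw [hf_eq, deriv_deriv_entropyObjective hn₀ (hIco hx)]
    exact deriv_deriv_entropyObjective_pos (by omega) hx
  have hcont : ContinuousOn f (Ico (1 / 2 : ℝ) 1) := fun x hx => by
    rw [hf_eq]
    exact (hasDerivAt_entropyObjective hn₀ (hIco hx)).continuousAt.continuousWithinAt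
  exact ⟨hpos, (strictConvexOn_of_deriv2_pos' (convex_Ico _ _) hcont hpos).convexOn⟩
end
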